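/- arXiv:0708.4177 — 6 statements merged into one kernel-verified Lean document; each statement's English description precedes it below -/
import Mathlib

section
/- (Necessity in Proposition 1.) Let 0 < M ≤ ∞ and, for each μ ∈ (0,M), let f_μ be a probability mass function on ℕ with mean Σ_n n f_μ(n) = μ. Suppose the family is closed under binomial subsampling in the sense that T_p f_μ = f_{pμ} for every μ ∈ (0,M) and every p ∈ (0,1]. Then there exists a real analytic function g on (−2M, 0) such that Σ_n f_μ(n) t^n = g(μ(t−1)) for all μ ∈ (0,M) and all t ∈ (−1,1). -/
open scoped BigOperators ENNReal

/-- `f` is a probability mass function on `ℕ`. -/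
def IsPMF (f : ℕ → ℝ) : Prop := (∀ n, 0 ≤ f n) ∧ HasSum f 1

/-- The binomial subsampling (independent `p`-thinning) of `f`:
`(T_p f)(m) = ∑_{n ≥ m} f(n) * C(n,m) * p^m * (1-p)^(n-m)` (written with `n = m + k`). -/
noncomputable def thin (p : ℝ) (f : ℕ → ℝ) : ℕ → ℝ :=
  fun m => ∑' k : ℕ, f (m + k) * ((m + k).choose m : ℝ) * p ^ m * (1 - p) ^ k

/-- The interval `(-2M, 0)` of real numbers, where `0 < M ≤ ∞` is an extended real number. -/
def negIoo (M : ℝ≥0∞) : Set ℝ := {x : ℝ | x < 0 ∧ ENNReal.ofReal (-x) < 2 * M}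

/-!
Thinning acts on generating functions by `Φ_{T_p f}(t) = Φ_f(1 - p + p t)`, so closedness says
exactly that `h_μ(x) = Φ_{f_μ}(1 + x / μ)`, defined for `x ∈ [-2μ, 0]`, does not depend on `μ`.
Each `h_μ` is analytic on `(-2μ, 0)` (a power series with summable coefficients composed with an
affine map), so the `h_μ` glue to an analytic `g` on `⋃_{μ < M} (-2μ, 0) = (-2M, 0)`.
-/

open Set Filter
open Finset.HasAntidiagonal (antidiagonal mem_antidiagonal sigmaAntidiagonalEquivProd)
open Finset (sum_congr mul_sum tsum_subtype)

noncomputable def pgf (f : ℕ → ℝ) (t : ℝ) : ℝ := ∑' n, f n * t ^ n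

lemma IsPMF.summable_abs {f : ℕ → ℝ} (hf : IsPMF f) : Summable fun n => |f n| :=
  hf.2.summable.congr fun n => (abs_of_nonneg (hf.1 n)).symm

lemma abs_one_add_div_le_one {μ x : ℝ} (hμ : 0 < μ) (h₁ : -(2 * μ) ≤ x) (h₂ : x ≤ 0) :
    |1 + x / μ| ≤ 1 := by
  rw [one_add_div hμ.ne', abs_div, abs_of_pos hμ, div_le_one hμ, abs_le]
  constructor <;> linarith

lemma abs_one_add_div_lt_one {μ x : ℝ} (hμ : 0 < μ) (h₁ : -(2 * μ) < x) (h₂ : x < 0) :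
    |1 + x / μ| < 1 := by
  rw [one_add_div hμ.ne', abs_div, abs_of_pos hμ, div_lt_one hμ, abs_lt]
  constructor <;> linarith

lemma sum_antidiagonal_choose_mul_pow_mul_pow (f : ℕ → ℝ) (s u : ℝ) (n : ℕ) :
    ∑ x ∈ antidiagonal n, f (x.1 + x.2) * (x.1 + x.2).choose x.1 * s ^ x.1 * u ^ x.2 =
      f n * (s + u) ^ n := by
  rw [(Commute.all s u).add_pow', mul_sum]
  refine sum_congr rfl fun x hx => ?_
  rw [mem_antidiagonal.1 hx, nsmul_eq_mul]
  ring

theorem tsum_tsum_choose_mul_pow_mul_pow {f : ℕ → ℝ} {s u : ℝ}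
    (hf : Summable fun n => |f n| * (|s| + |u|) ^ n) :
    ∑' m, ∑' k, f (m + k) * (m + k).choose m * s ^ m * u ^ k = ∑' n, f n * (s + u) ^ n := by
  set a : ℕ × ℕ → ℝ := fun x => f (x.1 + x.2) * (x.1 + x.2).choose x.1 * s ^ x.1 * u ^ x.2
  let e := sigmaAntidiagonalEquivProd (A := ℕ)
  have habs : Summable fun y => |a (e y)| := by
    refine (summable_sigma_of_nonneg fun _ => abs_nonneg _).2 ⟨fun _ => .of_finite, ?_⟩
    refine hf.congr fun n => ((tsum_subtype (antidiagonal n) fun x => |a x|).trans ?_).symm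
    rw [← sum_antidiagonal_choose_mul_pow_mul_pow (fun n => |f n|)]
    refine sum_congr rfl fun x _ => ?_
    simp only [a, abs_mul, abs_pow, Nat.abs_cast]
  have ha : Summable a := e.summable_iff.1 habs.of_abs
  calc ∑' m, ∑' k, a (m, k) = ∑' y, a (e y) := by rw [← ha.tsum_prod, e.tsum_eq]
    _ = ∑' n, ∑' x : antidiagonal n, a x := habs.of_abs.tsum_sigma' fun _ => .of_finite
    _ = ∑' n, f n * (s + u) ^ n := tsum_congr fun n => by
      rw [tsum_subtype (antidiagonal n) a, sum_antidiagonal_choose_mul_pow_mul_pow]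

theorem pgf_thin {f : ℕ → ℝ} (hf : Summable fun n => |f n|) {p t : ℝ} (hp : p ∈ Icc 0 1)
    (ht : |t| ≤ 1) : pgf (thin p f) t = pgf f (1 - p + p * t) := by
  have hbound : |p * t| + |1 - p| ≤ 1 := by
    rw [abs_mul, abs_of_nonneg hp.1, abs_of_nonneg (sub_nonneg.2 hp.2)]
    nlinarith [hp.1]
  have hsum : Summable fun n => |f n| * (|p * t| + |1 - p|) ^ n :=
    hf.of_nonneg_of_le (fun n => by positivity) fun n =>
      mul_le_of_le_one_right (abs_nonneg _) (pow_le_one₀ (by positivity) hbound)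
  calc pgf (thin p f) t
      = ∑' m, ∑' k, f (m + k) * (m + k).choose m * (p * t) ^ m * (1 - p) ^ k := by
        refine tsum_congr fun m => ?_
        rw [thin, ← tsum_mul_right]
        exact tsum_congr fun k => by ring
    _ = pgf f (1 - p + p * t) := by
        rw [tsum_tsum_choose_mul_pow_mul_pow hsum, add_comm, pgf]

theorem analyticAt_pgf {f : ℕ → ℝ} (hf : Summable fun n => |f n|) {t : ℝ} (ht : |t| < 1) :
    AnalyticAt ℝ (pgf f) t := by
  set P := FormalMultilinearSeries.ofScalars ℝ f
  have hrad : ((1 : NNReal) : ℝ≥0∞) ≤ P.radius :=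
    P.le_radius_of_summable_norm <| by
      simpa [P, FormalMultilinearSeries.ofScalars_norm] using hf
  have hP : P.sum = pgf f := funext fun y => by
    simp only [P, ← FormalMultilinearSeries.ofScalarsSum.eq_1,
      FormalMultilinearSeries.ofScalars_sum_eq, smul_eq_mul, pgf]
  rw [← hP]
  refine (P.hasFPowerSeriesOnBall (zero_lt_one.trans_le hrad)).analyticAt_of_mem ?_
  refine Metric.mem_eball.2 (lt_of_lt_of_le ?_ hrad)
  simpa [edist_zero_right, ← ofReal_norm] using ht

theorem analyticOnNhd_pgf_one_add_div {f : ℕ → ℝ} (hf : Summable fun n => |f n|) {μ : ℝ}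
    (hμ : 0 < μ) : AnalyticOnNhd ℝ (fun x => pgf f (1 + x / μ)) (Ioo (-(2 * μ)) 0) :=
  fun x hx => (analyticAt_pgf hf (abs_one_add_div_lt_one hμ hx.1 hx.2)).comp
    (f := fun x => 1 + x / μ) (by fun_prop)

theorem pgf_thin_div_one_add_div {f : ℕ → ℝ} (hf : Summable fun n => |f n|) {μ₁ μ₂ x : ℝ}
    (h₂ : 0 < μ₂) (h₂₁ : μ₂ ≤ μ₁) (hx₂ : -(2 * μ₂) ≤ x) (hx : x ≤ 0) :
    pgf (thin (μ₂ / μ₁) f) (1 + x / μ₂) = pgf f (1 + x / μ₁) := by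
  have h₁ : 0 < μ₁ := h₂.trans_le h₂₁
  rw [pgf_thin hf ⟨(div_pos h₂ h₁).le, (div_le_one h₁).2 h₂₁⟩
    (abs_one_add_div_le_one h₂ hx₂ hx)]
  congr 1
  field_simp
  ring

theorem pgf_one_add_div_eq_of_closed_thin {M : ℝ≥0∞} {f : ℝ → ℕ → ℝ}
    (hpmf : ∀ μ : ℝ, 0 < μ → ENNReal.ofReal μ < M → IsPMF (f μ))
    (hclosed : ∀ μ : ℝ, 0 < μ → ENNReal.ofReal μ < M →
      ∀ p ∈ Ioc (0 : ℝ) 1, thin p (f μ) = f (p * μ))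
    {μ₁ μ₂ x : ℝ} (h₁ : 0 < μ₁) (h₁M : ENNReal.ofReal μ₁ < M) (h₂ : 0 < μ₂)
    (h₂M : ENNReal.ofReal μ₂ < M) (hx₁ : -(2 * μ₁) ≤ x) (hx₂ : -(2 * μ₂) ≤ x) (hx : x ≤ 0) :
    pgf (f μ₁) (1 + x / μ₁) = pgf (f μ₂) (1 + x / μ₂) := by
  wlog h₂₁ : μ₂ ≤ μ₁ generalizing μ₁ μ₂
  · exact (this h₂ h₂M h₁ h₁M hx₂ hx₁ (le_of_not_ge h₂₁)).symm
  rw [← pgf_thin_div_one_add_div (hpmf μ₁ h₁ h₁M).summable_abs h₂ h₂₁ hx₂ hx,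
    hclosed μ₁ h₁ h₁M _ ⟨div_pos h₂ h₁, (div_le_one h₁).2 h₂₁⟩, div_mul_cancel₀ _ h₁.ne']

theorem exists_analyticOnNhd_of_eqOn_inter {𝕜 E F ι : Type*} [NontriviallyNormedField 𝕜]
    [NormedAddCommGroup E] [NormedSpace 𝕜 E] [NormedAddCommGroup F] [NormedSpace 𝕜 F]
    {U : ι → Set E} (hU : ∀ i, IsOpen (U i)) {g : ι → E → F}
    (hg : ∀ i, AnalyticOnNhd 𝕜 (g i) (U i)) (hcompat : ∀ i j, EqOn (g i) (g j) (U i ∩ U j)) :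
    ∃ G : E → F, AnalyticOnNhd 𝕜 G (⋃ i, U i) ∧ ∀ i, EqOn G (g i) (U i) := by
  classical
  let G : E → F := fun x => if h : ∃ i, x ∈ U i then g h.choose x else 0
  have hG : ∀ i, EqOn G (g i) (U i) := fun i x hx => by
    have h : ∃ i, x ∈ U i := ⟨i, hx⟩
    simp only [G, dif_pos h]
    exact hcompat _ _ ⟨h.choose_spec, hx⟩
  refine ⟨G, fun x hx => ?_, hG⟩
  obtain ⟨i, hi⟩ := mem_iUnion.1 hx
  exact (hg i x hi).congr (eventuallyEq_of_mem ((hU i).mem_nhds hi) (hG i)).symm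

lemma exists_pos_lt_of_mem_negIoo {M : ℝ≥0∞} {x : ℝ} (hx : x ∈ negIoo M) :
    ∃ μ : ℝ, 0 < μ ∧ ENNReal.ofReal μ < M ∧ -(2 * μ) < x := by
  have hhalf : ENNReal.ofReal (-x / 2) < M := by
    rw [ENNReal.ofReal_div_of_pos two_pos, ENNReal.ofReal_ofNat]
    exact ENNReal.div_lt_of_lt_mul' hx.2
  obtain ⟨μ, hμ, hxμ, hμM⟩ := ENNReal.lt_iff_exists_real_btwn.1 hhalf
  have hxμ' : -x / 2 < μ := (ENNReal.ofReal_lt_ofReal_iff_of_nonneg (by linarith [hx.1])).1 hxμ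
  exact ⟨μ, by linarith [hx.1], hμM, by linarith⟩

theorem pgf_form_of_closed_thin_general (M : ℝ≥0∞) (f : ℝ → ℕ → ℝ)
    (hpmf : ∀ μ : ℝ, 0 < μ → ENNReal.ofReal μ < M → IsPMF (f μ))
    (hclosed : ∀ μ : ℝ, 0 < μ → ENNReal.ofReal μ < M →
      ∀ p ∈ Set.Ioc (0 : ℝ) 1, thin p (f μ) = f (p * μ)) :
    ∃ g : ℝ → ℝ, AnalyticOnNhd ℝ g (negIoo M) ∧
      ∀ μ : ℝ, 0 < μ → ENNReal.ofReal μ < M →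
        ∀ t ∈ Set.Ioo (-1 : ℝ) 1, ∑' n : ℕ, f μ n * t ^ n = g (μ * (t - 1)) := by
  obtain ⟨g, hg, hgμ⟩ := exists_analyticOnNhd_of_eqOn_inter (𝕜 := ℝ)
    (U := fun μ : {μ : ℝ // 0 < μ ∧ ENNReal.ofReal μ < M} => Ioo (-(2 * (μ : ℝ))) 0)
    (g := fun μ x => pgf (f μ) (1 + x / μ)) (fun _ => isOpen_Ioo)
    (fun μ => analyticOnNhd_pgf_one_add_div (hpmf μ μ.2.1 μ.2.2).summable_abs μ.2.1)
    (fun μ ν x hx => pgf_one_add_div_eq_of_closed_thin hpmf hclosed μ.2.1 μ.2.2 ν.2.1 ν.2.2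
      hx.1.1.le hx.2.1.le hx.1.2.le)
  refine ⟨g, hg.mono fun x hx => ?_, fun μ hμ hμM t ht => ?_⟩
  · obtain ⟨μ, hμ, hμM, hxμ⟩ := exists_pos_lt_of_mem_negIoo hx
    exact mem_iUnion.2 ⟨⟨μ, hμ, hμM⟩, hxμ, hx.1⟩
  · have hmem : μ * (t - 1) ∈ Ioo (-(2 * μ)) 0 := ⟨by nlinarith [ht.1], by nlinarith [ht.2]⟩
    rw [hgμ ⟨μ, hμ, hμM⟩ hmem]
    change pgf (f μ) t = pgf (f μ) (1 + μ * (t - 1) / μ)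
    rw [mul_div_cancel_left₀ _ hμ.ne', add_sub_cancel]

/-- necessity in Proposition 1: if `(f_μ)_{0<μ<M}` is a family of pmfs on `ℕ`
with mean `μ` which is closed under binomial subsampling (`T_p f_μ = f_{pμ}`), then there is
a real analytic function `g` on `(-2M,0)` with `Φ_{f_μ}(t) = g(μ(t-1))` for all
`μ ∈ (0,M)` and `t ∈ (-1,1)`. -/
theorem pgf_form_of_closed_thin (M : ℝ≥0∞) (hM : 0 < M) (f : ℝ → ℕ → ℝ)
    (hpmf : ∀ μ : ℝ, 0 < μ → ENNReal.ofReal μ < M → IsPMF (f μ))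
    (hmean : ∀ μ : ℝ, 0 < μ → ENNReal.ofReal μ < M →
      HasSum (fun n : ℕ => (n : ℝ) * f μ n) μ)
    (hclosed : ∀ μ : ℝ, 0 < μ → ENNReal.ofReal μ < M →
      ∀ p ∈ Set.Ioc (0 : ℝ) 1, thin p (f μ) = f (p * μ)) :
    ∃ g : ℝ → ℝ, AnalyticOnNhd ℝ g (negIoo M) ∧
      ∀ μ : ℝ, 0 < μ → ENNReal.ofReal μ < M →
        ∀ t ∈ Set.Ioo (-1 : ℝ) 1, ∑' n : ℕ, f μ n * t ^ n = g (μ * (t - 1)) :=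
  pgf_form_of_closed_thin_general M f hpmf hclosed
end

section
/- (Boundary extension step in the proof of Proposition 1.) Let 0 < M < ∞ and let g be a real analytic function on (−2M, 0). Suppose that for every μ ∈ (0, M), the numbers c_k(μ) = g^{(k)}(−μ) · μ^k / k! satisfy c_k(μ) ≥ 0 for all k ≥ 0 and Σ_{k≥0} c_k(μ) = 1 (i.e., t ↦ g(μ(t−1)) is the pgf of a pmf). Then the same holds at μ = M: g^{(k)}(−M) · M^k / k! ≥ 0 for all k ≥ 0 and Σ_{k≥0} g^{(k)}(−M) · M^k / k! = 1, so that k ↦ g^{(k)}(−M) M^k / k! is a probability mass function on ℕ whose pgf is g(M(t−1)). -/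
/-!
Nonnegativity of the coefficients `c_k(μ)` and the bound `∑ c_k(μ) ≤ 1` pass to the
limit `μ → M⁻` termwise. Once the coefficients at `-μ` are nonnegative and summable, the
Taylor series of `g` at `-μ` has radius at least `μ`, so by the identity theorem it represents
`g` on all of `(-2μ, 0)`: `g (μ (t - 1)) = ∑ c_k(μ) t^k` for `|t| < 1`. Abel's theorem then
identifies `∑ c_k(μ)` with `lim_{x → 0⁻} g x`, for `μ = M` and `μ = M / 2` alike, so
`∑ c_k(M) = 1`.
-/

open Filter Set Topology

theorem AnalyticOnNhd.hasFPowerSeriesOnBall_of_le_radius {E F : Type*}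
    [NormedAddCommGroup E] [NormedSpace ℝ E] [NormedAddCommGroup F] [NormedSpace ℝ F]
    [CompleteSpace F] {f : E → F} {p : FormalMultilinearSeries ℝ E F} {x : E} {r : ENNReal}
    (hf : AnalyticOnNhd ℝ f (Metric.eball x r)) (hp : HasFPowerSeriesAt f p x)
    (hr0 : 0 < r) (hr : r ≤ p.radius) : HasFPowerSeriesOnBall f p x r := by
  have hsum : HasFPowerSeriesOnBall (fun y => p.sum (y - x)) p x p.radius := by
    simpa using (p.hasFPowerSeriesOnBall (hr0.trans_le hr)).comp_sub x
  refine (hsum.mono hr0 hr).congr (hf.eqOn_of_preconnected_of_eventuallyEq ?_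
    (convex_eball x r).isPreconnected (Metric.mem_eball_self hr0) ?_).symm
  · exact hsum.analyticOnNhd.mono (Metric.eball_subset_eball hr)
  · filter_upwards [hp.eventually_hasSum_sub, hsum.hasFPowerSeriesAt.eventually_hasSum_sub]
      with y h1 h2 using h1.unique h2

/-- The coefficient `c_k(μ)`. -/
noncomputable def pgfCoeff (g : ℝ → ℝ) (μ : ℝ) (k : ℕ) : ℝ :=
  iteratedDeriv k g (-μ) * μ ^ k / k.factorial

section pgfCoeff

variable {g : ℝ → ℝ} {μ : ℝ}

lemma eball_neg_self_eq_Ioo (μ : ℝ) :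
    Metric.eball (-μ) (ENNReal.ofReal μ) = Ioo (-(2 * μ)) 0 := by
  rw [Metric.eball_ofReal, Real.ball_eq_Ioo]
  congr 1 <;> ring

lemma hasSum_pgfCoeff_mul_pow (hμ : 0 < μ) (hg : AnalyticOnNhd ℝ g (Ioo (-(2 * μ)) 0))
    (hnn : ∀ k, 0 ≤ pgfCoeff g μ k) (hs : Summable (pgfCoeff g μ)) {t : ℝ}
    (ht : t ∈ Ioo (-1) 1) : HasSum (fun k => pgfCoeff g μ k * t ^ k) (g (μ * (t - 1))) := by
  set p := FormalMultilinearSeries.ofScalars ℝ fun k => iteratedDeriv k g (-μ) / k.factorial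
  have hp : HasFPowerSeriesAt g p (-μ) :=
    (hg (-μ) ⟨by linarith, by linarith⟩).hasFPowerSeriesAt
  have hrad : ENNReal.ofReal μ ≤ p.radius := by
    refine p.le_radius_of_summable (hs.congr fun k => ?_)
    rw [FormalMultilinearSeries.ofScalars_norm, Real.norm_eq_abs, Real.coe_toNNReal _ hμ.le,
      ← abs_of_nonneg (hnn k), pgfCoeff, abs_div, abs_div, abs_mul, abs_pow, abs_of_pos hμ]
    ring
  have hball := (eball_neg_self_eq_Ioo μ ▸ hg).hasFPowerSeriesOnBall_of_le_radius hp
    (by simpa using hμ) hrad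
  have hmem : μ * (t - 1) ∈ Metric.eball (-μ) (ENNReal.ofReal μ) := by
    rw [eball_neg_self_eq_Ioo]
    constructor <;> nlinarith [ht.1, ht.2]
  refine (hball.hasSum_sub hmem).congr_fun fun k => ?_
  rw [FormalMultilinearSeries.ofScalars_apply_eq, pgfCoeff, smul_eq_mul]
  ring

lemma tendsto_nhdsLT_zero_of_hasSum_pgfCoeff (hμ : 0 < μ)
    (hg : AnalyticOnNhd ℝ g (Ioo (-(2 * μ)) 0)) (hnn : ∀ k, 0 ≤ pgfCoeff g μ k) {s : ℝ}
    (hs : HasSum (pgfCoeff g μ) s) : Tendsto g (𝓝[<] 0) (𝓝 s) := by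
  have habel : Tendsto (fun t => g (μ * (t - 1))) (𝓝[<] 1) (𝓝 s) := by
    refine (Real.tendsto_tsum_powerSeries_nhdsWithin_lt hs.tendsto_sum_nat).congr' ?_
    filter_upwards [Ioo_mem_nhdsLT (show (-1 : ℝ) < 1 by norm_num)] with t ht
    exact (hasSum_pgfCoeff_mul_pow hμ hg hnn hs.summable ht).tsum_eq
  have hrescale : Tendsto (fun x => 1 + x / μ) (𝓝[<] 0) (𝓝[<] 1) := by
    refine tendsto_nhdsWithin_of_tendsto_nhds_of_eventually_within _ ?_ ?_
    · exact ((continuous_const.add (continuous_id.div_const μ)).tendsto' 0 1 (by simp))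
        |>.mono_left nhdsWithin_le_nhds
    · filter_upwards [self_mem_nhdsWithin] with x hx
      have : x / μ < 0 := div_neg_of_neg_of_pos hx hμ
      simp only [mem_Iio]; linarith
  refine (habel.comp hrescale).congr fun x => ?_
  simp only [Function.comp_apply]
  congr 1
  field_simp
  ring

lemma continuousAt_pgfCoeff (hg : AnalyticAt ℝ g (-μ)) (k : ℕ) :
    ContinuousAt (fun ν => pgfCoeff g ν k) μ := by
  have hderiv : ContinuousAt (iteratedDeriv k g) (-μ) := by
    rw [iteratedDeriv_eq_iterate]
    exact (hg.iterated_deriv k).continuousAt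
  exact ((hderiv.comp continuous_neg.continuousAt).mul
    (continuous_pow k).continuousAt).div_const _

end pgfCoeff

/-- boundary extension step in the proof of Proposition 1: let `0 < M < ∞`
and let `g` be real analytic on `(-2M,0)` such that for every `μ ∈ (0,M)` the numbers
`c_k(μ) = g^{(k)}(-μ) μ^k / k!` are nonnegative and sum to `1` (i.e. `t ↦ g(μ(t-1))` is a
pgf). Then the same holds at `μ = M`, and `k ↦ g^{(k)}(-M) M^k / k!` is a pmf on `ℕ` whose
pgf is `g(M(t-1))`. -/
theorem pgf_extends_to_boundary (M : ℝ) (hM : 0 < M) (g : ℝ → ℝ)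
    (hg : AnalyticOnNhd ℝ g (Set.Ioo (-(2 * M)) 0))
    (hpgf : ∀ μ ∈ Set.Ioo (0 : ℝ) M,
      (∀ k : ℕ, 0 ≤ iteratedDeriv k g (-μ) * μ ^ k / k.factorial) ∧
      HasSum (fun k : ℕ => iteratedDeriv k g (-μ) * μ ^ k / k.factorial) 1) :
    (∀ k : ℕ, 0 ≤ iteratedDeriv k g (-M) * M ^ k / k.factorial) ∧
    HasSum (fun k : ℕ => iteratedDeriv k g (-M) * M ^ k / k.factorial) 1 ∧
    ∀ t ∈ Set.Ioo (-1 : ℝ) 1,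
      ∑' k : ℕ, (iteratedDeriv k g (-M) * M ^ k / k.factorial) * t ^ k = g (M * (t - 1)) := by
  have hlim : ∀ k, Tendsto (fun μ => pgfCoeff g μ k) (𝓝[<] M) (𝓝 (pgfCoeff g M k)) := fun k =>
    (continuousAt_pgfCoeff (hg (-M) ⟨by linarith, by linarith⟩) k).tendsto.mono_left
      nhdsWithin_le_nhds
  have hev : ∀ᶠ μ in 𝓝[<] M, μ ∈ Ioo 0 M := Ioo_mem_nhdsLT hM
  have hnn : ∀ k, 0 ≤ pgfCoeff g M k := fun k =>
    ge_of_tendsto (hlim k) (hev.mono fun μ hμ => (hpgf μ hμ).1 k)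
  have hsummable : Summable (pgfCoeff g M) := by
    refine summable_of_sum_range_le (c := 1) hnn fun n => le_of_tendsto
      (tendsto_finsetSum _ fun k _ => hlim k) (hev.mono fun μ hμ => ?_)
    exact sum_le_hasSum _ (fun k _ => (hpgf μ hμ).1 k) (hpgf μ hμ).2
  have hhalf : M / 2 ∈ Ioo 0 M := ⟨by linarith, by linarith⟩
  have hone : Tendsto g (𝓝[<] 0) (𝓝 1) :=
    tendsto_nhdsLT_zero_of_hasSum_pgfCoeff hhalf.1
      (hg.mono (Ioo_subset_Ioo_left (by linarith))) (hpgf _ hhalf).1 (hpgf _ hhalf).2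
  have hsum : ∑' k, pgfCoeff g M k = 1 := tendsto_nhds_unique
    (tendsto_nhdsLT_zero_of_hasSum_pgfCoeff hM hg hnn hsummable.hasSum) hone
  exact ⟨hnn, hsum ▸ hsummable.hasSum, fun t ht =>
    (hasSum_pgfCoeff_mul_pow hM hg hnn hsummable ht).tsum_eq⟩
end

section
/- (Proposition 2, case (ii).) Let 0 < M < ∞ and let g be a real analytic function on (−2M, 0) such that for each μ ∈ (0, M] there is a probability mass function f_μ on ℕ with Σ_n f_μ(n) t^n = g(μ(t−1)) for all t ∈ (−1,1). Suppose moreover that M is maximal: for every μ > M there is no pmf h on ℕ with Σ_n h(n) t^n = g(μ(t−1)) for all t ∈ (max(−1, 1 − 2M/μ), 1). Then: (a) for every μ ∈ (0, M), f_μ = T_{μ/M} f_M, i.e., every member of the family is an independent p-thinning of f_M; and (b) f_M is a top inverse: for every p ∈ (0,1) there is no pmf h on ℕ with T_p h = f_M. -/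
open scoped BigOperators ENNReal

/-!
The probability generating function of a thinning is a reparametrisation of the original one:
`∑ₘ (T_p f)(m) tᵐ = ∑ₙ f(n) (1 - p + p t)ⁿ` for `|t| ≤ 1`. With `p = μ / M` the right-hand side
for `f = f_M` is `g(μ (t - 1))`, the generating function of `f_μ`, and a pmf is determined by its
generating function on `(-1, 1)`; this gives (a). Conversely, if `T_p h = f_M`, substituting
`t = 1 + (s - 1) / p` shows that `h` has generating function `g((M / p) (s - 1))` for
`s ∈ (1 - 2p, 1)`, contradicting the maximality of `M` since `M / p > M`; this gives (b).
-/

open Finset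

theorem sum_antidiagonal_choose_mul_pow (f : ℕ → ℝ) (u v : ℝ) (n : ℕ) :
    ∑ x ∈ antidiagonal n, f (x.1 + x.2) * ((x.1 + x.2).choose x.1 : ℝ) * u ^ x.1 * v ^ x.2 =
      f n * (u + v) ^ n := by
  rw [(Commute.all u v).add_pow', mul_sum]
  refine sum_congr rfl fun x hx => ?_
  rw [mem_antidiagonal.mp hx, nsmul_eq_mul]
  ring

theorem hasSum_choose_mul_pow {f : ℕ → ℝ} {u v : ℝ}
    (hf : Summable fun n => |f n| * (|u| + |v|) ^ n) :
    HasSum (fun x : ℕ × ℕ => f (x.1 + x.2) * ((x.1 + x.2).choose x.1 : ℝ) * u ^ x.1 * v ^ x.2)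
      (∑' n, f n * (u + v) ^ n) := by
  set F := fun x : ℕ × ℕ => f (x.1 + x.2) * ((x.1 + x.2).choose x.1 : ℝ) * u ^ x.1 * v ^ x.2
  set e := HasAntidiagonal.sigmaAntidiagonalEquivProd (A := ℕ)
  have hfiber (G : ℕ × ℕ → ℝ) (n : ℕ) :
      ∑' y : antidiagonal n, G (e ⟨n, y⟩) = ∑ y ∈ antidiagonal n, G y := by
    rw [tsum_fintype]
    exact sum_coe_sort (antidiagonal n) G
  have hF : Summable F := by
    rw [← summable_abs_iff, ← e.summable_iff]
    refine (summable_sigma_of_nonneg fun _ => abs_nonneg _).2 ⟨fun n => .of_finite, ?_⟩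
    convert hf using 2 with n
    rw [hfiber (|F ·|), ← sum_antidiagonal_choose_mul_pow (|f ·|)]
    simp only [F, abs_mul, abs_pow, Nat.abs_cast]
  have hsigma := (e.hasSum_iff.mpr hF.hasSum).sigma fun n => (Summable.of_finite).hasSum
  simp only [Function.comp_def, hfiber F, F, sum_antidiagonal_choose_mul_pow] at hsigma
  exact hsigma.tsum_eq ▸ hF.hasSum

theorem hasSum_thin_mul_pow {f : ℕ → ℝ} (hf : Summable f) {p t : ℝ} (hp : p ∈ Set.Icc 0 1)
    (ht : |t| ≤ 1) :
    HasSum (fun m => thin p f m * t ^ m) (∑' n, f n * (1 - p + p * t) ^ n) := by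
  have hq : |p * t| + |1 - p| ≤ 1 := by
    rw [abs_mul, abs_of_nonneg hp.1, abs_of_nonneg (sub_nonneg.2 hp.2)]
    nlinarith [hp.1]
  have hF := hasSum_choose_mul_pow (hf.abs.of_nonneg_of_le (fun n => by positivity) fun n =>
    mul_le_of_le_one_right (abs_nonneg _) (pow_le_one₀ (by positivity) hq))
  rw [add_comm (p * t)] at hF
  refine hF.prod_fiberwise fun m => ?_
  have hfiber : thin p f m * t ^ m =
      ∑' k, f (m + k) * ((m + k).choose m : ℝ) * (p * t) ^ m * (1 - p) ^ k := by
    unfold thin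
    rw [← tsum_mul_right]
    exact tsum_congr fun k => by ring
  exact hfiber ▸ (hF.summable.prod_factor m).hasSum

theorem IsPMF.thin {f : ℕ → ℝ} (hf : IsPMF f) {p : ℝ} (hp : p ∈ Set.Icc 0 1) :
    IsPMF (thin p f) := by
  refine ⟨fun m => tsum_nonneg fun k => ?_, ?_⟩
  · exact mul_nonneg (mul_nonneg (mul_nonneg (hf.1 _) (Nat.cast_nonneg _)) (pow_nonneg hp.1 _))
      (pow_nonneg (sub_nonneg.2 hp.2) _)
  · simpa [hf.2.tsum_eq] using hasSum_thin_mul_pow hf.2.summable hp (t := 1) (by simp)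

theorem IsPMF.one_le_radius {f : ℕ → ℝ} (hf : IsPMF f) :
    1 ≤ (FormalMultilinearSeries.ofScalars ℝ f).radius := by
  simpa using (FormalMultilinearSeries.ofScalars ℝ f).le_radius_of_summable_norm (r := 1)
    (by simpa [FormalMultilinearSeries.ofScalars_norm] using hf.2.summable.norm)

theorem eq_of_eventually_tsum_mul_pow_eq {a b : ℕ → ℝ}
    (ha : 0 < (FormalMultilinearSeries.ofScalars ℝ a).radius)
    (hb : 0 < (FormalMultilinearSeries.ofScalars ℝ b).radius)
    (h : ∀ᶠ t in nhds 0, ∑' n, a n * t ^ n = ∑' n, b n * t ^ n) : a = b := by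
  have hA := ((FormalMultilinearSeries.ofScalars ℝ a).hasFPowerSeriesOnBall ha).hasFPowerSeriesAt
  have hB := ((FormalMultilinearSeries.ofScalars ℝ b).hasFPowerSeriesOnBall hb).hasFPowerSeriesAt
  refine FormalMultilinearSeries.ofScalars_series_injective ℝ ℝ
    (hA.eq_formalMultilinearSeries_of_eventually hB ?_)
  filter_upwards [h] with t ht
  exact (FormalMultilinearSeries.ofScalars_sum_eq a t).trans
    (ht.trans (FormalMultilinearSeries.ofScalars_sum_eq b t).symm)

theorem IsPMF.ext_of_tsum_mul_pow_eq {a b : ℕ → ℝ} (ha : IsPMF a) (hb : IsPMF b)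
    (h : ∀ t ∈ Set.Ioo (-1 : ℝ) 1, ∑' n, a n * t ^ n = ∑' n, b n * t ^ n) : a = b :=
  eq_of_eventually_tsum_mul_pow_eq (one_pos.trans_le ha.one_le_radius)
    (one_pos.trans_le hb.one_le_radius)
    (Filter.eventually_of_mem (Ioo_mem_nhds (by norm_num) (by norm_num)) h)

theorem one_sub_add_mul_mem_Ioo {p t : ℝ} (hp : p ∈ Set.Ioc 0 1) (ht : t ∈ Set.Ioo (-1 : ℝ) 1) :
    1 - p + p * t ∈ Set.Ioo (-1 : ℝ) 1 := by
  constructor <;> nlinarith [ht.1, ht.2, hp.1, hp.2]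

theorem one_add_sub_div_mem_Ioo {p s : ℝ} (hp : 0 < p) (hs : s ∈ Set.Ioo (1 - 2 * p) 1) :
    1 + (s - 1) / p ∈ Set.Ioo (-1 : ℝ) 1 := by
  constructor
  · have : -2 < (s - 1) / p := by rw [lt_div_iff₀ hp]; linarith [hs.1]
    linarith
  · linarith [div_neg_of_neg_of_pos (sub_neg.2 hs.2) hp]

theorem top_inverse_case_general (M : ℝ) (hM : 0 < M) (g : ℝ → ℝ)
    (f : ℝ → ℕ → ℝ)
    (hpmf : ∀ μ ∈ Set.Ioc (0 : ℝ) M, IsPMF (f μ))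
    (hpgf : ∀ μ ∈ Set.Ioc (0 : ℝ) M,
      ∀ t ∈ Set.Ioo (-1 : ℝ) 1, ∑' n : ℕ, f μ n * t ^ n = g (μ * (t - 1)))
    (hmax : ∀ μ : ℝ, M < μ → ¬ ∃ h : ℕ → ℝ, IsPMF h ∧
      ∀ t ∈ Set.Ioo (max (-1 : ℝ) (1 - 2 * M / μ)) 1,
        ∑' n : ℕ, h n * t ^ n = g (μ * (t - 1))) :
    (∀ μ ∈ Set.Ioo (0 : ℝ) M, f μ = thin (μ / M) (f M)) ∧
    (∀ p ∈ Set.Ioo (0 : ℝ) 1, ¬ ∃ h : ℕ → ℝ, IsPMF h ∧ thin p h = f M) := by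
  have hfM : IsPMF (f M) := hpmf M ⟨hM, le_rfl⟩
  have hpgfM := hpgf M ⟨hM, le_rfl⟩
  constructor
  · rintro μ ⟨hμ0, hμM⟩
    have hp : μ / M ∈ Set.Ioc 0 1 := ⟨div_pos hμ0 hM, (div_le_one hM).2 hμM.le⟩
    have hp' := Set.Ioc_subset_Icc_self hp
    refine (hpmf μ ⟨hμ0, hμM.le⟩).ext_of_tsum_mul_pow_eq (hfM.thin hp') fun t ht => ?_
    rw [(hasSum_thin_mul_pow hfM.2.summable hp' (abs_lt.2 ht).le).tsum_eq,
      hpgfM _ (one_sub_add_mul_mem_Ioo hp ht), hpgf μ ⟨hμ0, hμM.le⟩ t ht]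
    congr 1
    field_simp
    ring
  · rintro p ⟨hp0, hp1⟩ ⟨h, hh, hth⟩
    refine hmax (M / p) ((lt_div_iff₀ hp0).2 (by nlinarith)) ⟨h, hh, fun s hs => ?_⟩
    have hlow : max (-1 : ℝ) (1 - 2 * M / (M / p)) = 1 - 2 * p := by
      rw [max_eq_right] <;> field_simp
      linarith
    have ht := one_add_sub_div_mem_Ioo hp0 (hlow ▸ hs)
    have key := (hasSum_thin_mul_pow hh.2.summable ⟨hp0.le, hp1.le⟩ (abs_lt.2 ht).le).tsum_eq
    rw [hth, hpgfM _ ht, show 1 - p + p * (1 + (s - 1) / p) = s by field_simp; ring] at key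
    rw [← key]
    congr 1
    field_simp
    ring

/-- Proposition 2, case (ii): let `0 < M < ∞`, let `g` be real analytic on
`(-2M,0)`, and for each `μ ∈ (0,M]` let `f_μ` be a pmf on `ℕ` with pgf `g(μ(t-1))` on
`(-1,1)`. If `M` is maximal (for `μ > M` no pmf has pgf `g(μ(t-1))` on the appropriate
interval), then (a) every `f_μ`, `μ ∈ (0,M)`, is the `μ/M`-thinning of `f_M`, and
(b) `f_M` is a top inverse. -/
theorem top_inverse_case (M : ℝ) (hM : 0 < M) (g : ℝ → ℝ)
    (hg : AnalyticOnNhd ℝ g (Set.Ioo (-(2 * M)) 0))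
    (f : ℝ → ℕ → ℝ)
    (hpmf : ∀ μ ∈ Set.Ioc (0 : ℝ) M, IsPMF (f μ))
    (hpgf : ∀ μ ∈ Set.Ioc (0 : ℝ) M,
      ∀ t ∈ Set.Ioo (-1 : ℝ) 1, ∑' n : ℕ, f μ n * t ^ n = g (μ * (t - 1)))
    (hmax : ∀ μ : ℝ, M < μ → ¬ ∃ h : ℕ → ℝ, IsPMF h ∧
      ∀ t ∈ Set.Ioo (max (-1 : ℝ) (1 - 2 * M / μ)) 1,
        ∑' n : ℕ, h n * t ^ n = g (μ * (t - 1))) :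
    (∀ μ ∈ Set.Ioo (0 : ℝ) M, f μ = thin (μ / M) (f M)) ∧
    (∀ p ∈ Set.Ioo (0 : ℝ) 1, ¬ ∃ h : ℕ → ℝ, IsPMF h ∧ thin p h = f M) :=
  top_inverse_case_general M hM g f hpmf hpgf hmax
end

section
/- (Proposition 3.) Let r ≥ 1 and let Θ ⊆ ℝ^r be a nonempty open convex cone. For each θ ∈ Θ let f_θ be a probability mass function on ℕ with pgf Φ(t, θ) = Σ_n f_θ(n) t^n, and assume θ ↦ Φ(t, θ) is continuous on Θ for each fixed t ∈ (0,1). Then Φ(t, θ₁ + θ₂) = Φ(t, θ₁) · Φ(t, θ₂) for all θ₁, θ₂ ∈ Θ and t ∈ (0,1) (closure under addition) if and only if there exist functions α₁, …, α_r : (0,1) → ℝ, not depending on θ, such that Φ(t, θ) = exp(Σ_{i=1}^r α_i(t) θ_i) for all θ ∈ Θ and t ∈ (0,1). (Note that Φ(t, θ) > 0 for t ∈ (0,1) since f_θ is a pmf.) -/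
open scoped BigOperators

/-!
Since the pgf is positive on `(0,1)`, closure under addition says exactly that, for each fixed
`t`, `θ ↦ log Φ(t, θ)` is additive and continuous on the cone `Θ`. Fixing `θ₀ ∈ Θ`, every `x`
satisfies `x + c • θ₀ ∈ Θ` for large `c`, and `L (x + c • θ₀) - L (c • θ₀)` does not depend on
such `c`; this extends an additive continuous `L` on `Θ` to a continuous additive map on the whole
space, which is automatically `ℝ`-linear. The coefficients of this linear form are the `α i t`.
-/

theorem Convex.add_mem_of_smul_mem {E : Type*} [AddCommGroup E] [Module ℝ E] {Θ : Set E}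
    (hconv : Convex ℝ Θ) (hcone : ∀ c : ℝ, 0 < c → ∀ θ ∈ Θ, c • θ ∈ Θ)
    {θ₁ θ₂ : E} (h₁ : θ₁ ∈ Θ) (h₂ : θ₂ ∈ Θ) : θ₁ + θ₂ ∈ Θ := by
  have hmid := hconv h₁ h₂ (by norm_num : (0 : ℝ) ≤ 1 / 2) (by norm_num : (0 : ℝ) ≤ 1 / 2)
    (by norm_num)
  simpa [smul_add, smul_smul] using hcone 2 two_pos _ hmid

namespace ConvexCone

variable {E : Type*} [AddCommGroup E] [Module ℝ E] {C : ConvexCone ℝ E} {θ₀ : E}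

theorem exists_add_smul_mem [TopologicalSpace E] [ContinuousAdd E] [ContinuousSMul ℝ E]
    (hopen : IsOpen (C : Set E)) (hθ₀ : θ₀ ∈ C) (x : E) : ∃ c : ℝ, 0 < c ∧ x + c • θ₀ ∈ C := by
  have hlim : Filter.Tendsto (fun t : ℝ => θ₀ + t • x) (nhdsWithin 0 (Set.Ioi 0)) (nhds θ₀) := by
    have : Continuous fun t : ℝ => θ₀ + t • x := by fun_prop
    simpa using (this.tendsto 0).mono_left nhdsWithin_le_nhds
  obtain ⟨t, hmem, ht⟩ :=
    ((hlim.eventually (hopen.mem_nhds hθ₀)).and self_mem_nhdsWithin).exists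
  refine ⟨t⁻¹, inv_pos.mpr ht, ?_⟩
  have := C.smul_mem (inv_pos.mpr ht) hmem
  rwa [smul_add, smul_smul, inv_mul_cancel₀ ht.ne', one_smul, add_comm] at this

open Classical in
noncomputable def extendAdditive (C : ConvexCone ℝ E) (θ₀ : E) (L : E → ℝ) (x : E) : ℝ :=
  if h : ∃ c : ℝ, 0 < c ∧ x + c • θ₀ ∈ C then L (x + h.choose • θ₀) - L (h.choose • θ₀) else 0

variable {L : E → ℝ}

theorem extendAdditive_eq (hθ₀ : θ₀ ∈ C) (hLadd : ∀ x ∈ C, ∀ y ∈ C, L (x + y) = L x + L y)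
    {x : E} {c : ℝ} (hc : 0 < c) (hx : x + c • θ₀ ∈ C) :
    C.extendAdditive θ₀ L x = L (x + c • θ₀) - L (c • θ₀) := by
  have h : ∃ d : ℝ, 0 < d ∧ x + d • θ₀ ∈ C := ⟨c, hc, hx⟩
  rw [extendAdditive, dif_pos h]
  obtain ⟨hd, hxd⟩ := h.choose_spec
  have := hLadd _ hxd _ (C.smul_mem hc hθ₀)
  rw [add_right_comm, hLadd _ hx _ (C.smul_mem hd hθ₀)] at this
  linarith

theorem extendAdditive_eq_of_mem (hθ₀ : θ₀ ∈ C)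
    (hLadd : ∀ x ∈ C, ∀ y ∈ C, L (x + y) = L x + L y) {θ : E} (hθ : θ ∈ C) :
    C.extendAdditive θ₀ L θ = L θ := by
  rw [extendAdditive_eq hθ₀ hLadd one_pos (by simpa using C.add_mem hθ hθ₀), one_smul,
    hLadd _ hθ _ hθ₀, add_sub_cancel_right]

variable [TopologicalSpace E] [IsTopologicalAddGroup E] [ContinuousSMul ℝ E]

theorem extendAdditive_add (hopen : IsOpen (C : Set E)) (hθ₀ : θ₀ ∈ C)
    (hLadd : ∀ x ∈ C, ∀ y ∈ C, L (x + y) = L x + L y) (x y : E) :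
    C.extendAdditive θ₀ L (x + y) = C.extendAdditive θ₀ L x + C.extendAdditive θ₀ L y := by
  obtain ⟨c, hc, hx⟩ := exists_add_smul_mem hopen hθ₀ x
  obtain ⟨d, hd, hy⟩ := exists_add_smul_mem hopen hθ₀ y
  have hxy : x + y + (c + d) • θ₀ = (x + c • θ₀) + (y + d • θ₀) := by
    rw [add_smul]; abel
  rw [extendAdditive_eq hθ₀ hLadd (add_pos hc hd) (hxy ▸ C.add_mem hx hy),
    extendAdditive_eq hθ₀ hLadd hc hx, extendAdditive_eq hθ₀ hLadd hd hy, hxy,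
    hLadd _ hx _ hy, add_smul, hLadd _ (C.smul_mem hc hθ₀) _ (C.smul_mem hd hθ₀)]
  ring

theorem continuous_extendAdditive (hopen : IsOpen (C : Set E)) (hθ₀ : θ₀ ∈ C)
    (hLadd : ∀ x ∈ C, ∀ y ∈ C, L (x + y) = L x + L y) (hLcont : ContinuousOn L C) :
    Continuous (C.extendAdditive θ₀ L) := by
  refine continuous_iff_continuousAt.mpr fun x => ?_
  obtain ⟨c, hc, hx⟩ := exists_add_smul_mem hopen hθ₀ x
  have hnhds : {y | y + c • θ₀ ∈ C} ∈ nhds x :=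
    (hopen.preimage (continuous_add_const _)).mem_nhds hx
  have hloc : (fun y => L (y + c • θ₀) - L (c • θ₀)) =ᶠ[nhds x] C.extendAdditive θ₀ L :=
    Filter.mem_of_superset hnhds fun y hy => (extendAdditive_eq hθ₀ hLadd hc hy).symm
  refine ContinuousAt.congr ?_ hloc
  exact ((hLcont.continuousAt (hopen.mem_nhds hx)).comp (f := fun y => y + c • θ₀)
    (continuous_add_const _).continuousAt).sub continuousAt_const

theorem exists_continuousLinearMap_eqOn_of_additive (hopen : IsOpen (C : Set E))
    (hLadd : ∀ x ∈ C, ∀ y ∈ C, L (x + y) = L x + L y) (hLcont : ContinuousOn L C) :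
    ∃ φ : E →L[ℝ] ℝ, Set.EqOn L φ C := by
  rcases (C : Set E).eq_empty_or_nonempty with hempty | ⟨θ₀, hθ₀⟩
  · exact ⟨0, hempty ▸ Set.eqOn_empty _ _⟩
  let F : E →+ ℝ :=
    { toFun := C.extendAdditive θ₀ L
      map_zero' := by simpa using extendAdditive_add hopen hθ₀ hLadd 0 0
      map_add' := extendAdditive_add hopen hθ₀ hLadd }
  exact ⟨F.toRealLinearMap (continuous_extendAdditive hopen hθ₀ hLadd hLcont),
    fun θ hθ => (extendAdditive_eq_of_mem hθ₀ hLadd hθ).symm⟩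

end ConvexCone

theorem IsPMF.pgf_pos {f : ℕ → ℝ} (hf : IsPMF f) {t : ℝ} (ht : t ∈ Set.Ioo (0 : ℝ) 1) :
    0 < ∑' n : ℕ, f n * t ^ n := by
  have hterm_nonneg (n : ℕ) : 0 ≤ f n * t ^ n := mul_nonneg (hf.1 n) (pow_nonneg ht.1.le n)
  have hsummable : Summable fun n => f n * t ^ n :=
    hf.2.summable.of_nonneg_of_le hterm_nonneg fun n =>
      mul_le_of_le_one_right (hf.1 n) (pow_le_one₀ ht.1.le ht.2.le)
  obtain ⟨n, hn⟩ : ∃ n, f n ≠ 0 := by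
    by_contra! h
    exact one_ne_zero (hf.2.unique (by simp [funext h]))
  exact hsummable.tsum_pos hterm_nonneg n (mul_pos ((hf.1 n).lt_of_ne' hn) (pow_pos ht.1 n))

theorem proposition3_general (r : ℕ) (Θ : Set (Fin r → ℝ))
    (hopen : IsOpen Θ) (hconv : Convex ℝ Θ)
    (hcone : ∀ c : ℝ, 0 < c → ∀ θ ∈ Θ, c • θ ∈ Θ)
    (f : (Fin r → ℝ) → ℕ → ℝ) (hpmf : ∀ θ ∈ Θ, IsPMF (f θ))
    (hcont : ∀ t ∈ Set.Ioo (0 : ℝ) 1,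
      ContinuousOn (fun θ => ∑' n : ℕ, f θ n * t ^ n) Θ) :
    (∀ θ₁ ∈ Θ, ∀ θ₂ ∈ Θ, ∀ t ∈ Set.Ioo (0 : ℝ) 1,
        ∑' n : ℕ, f (θ₁ + θ₂) n * t ^ n
          = (∑' n : ℕ, f θ₁ n * t ^ n) * (∑' n : ℕ, f θ₂ n * t ^ n)) ↔
    (∃ α : Fin r → ℝ → ℝ, ∀ θ ∈ Θ, ∀ t ∈ Set.Ioo (0 : ℝ) 1,
        ∑' n : ℕ, f θ n * t ^ n = Real.exp (∑ i : Fin r, α i t * θ i)) := by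
  have hΘadd {θ₁ θ₂} (h₁ : θ₁ ∈ Θ) (h₂ : θ₂ ∈ Θ) : θ₁ + θ₂ ∈ Θ :=
    hconv.add_mem_of_smul_mem hcone h₁ h₂
  let C : ConvexCone ℝ (Fin r → ℝ) :=
    ⟨Θ, fun c hc θ hθ => hcone c hc θ hθ, fun _ h₁ _ h₂ => hΘadd h₁ h₂⟩
  have hpos {θ} (hθ : θ ∈ Θ) {t} (ht : t ∈ Set.Ioo (0 : ℝ) 1) : 0 < ∑' n : ℕ, f θ n * t ^ n :=
    (hpmf θ hθ).pgf_pos ht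
  constructor
  · intro hmul
    have hlin (t) (ht : t ∈ Set.Ioo (0 : ℝ) 1) : ∃ φ : (Fin r → ℝ) →L[ℝ] ℝ,
        Set.EqOn (fun θ => Real.log (∑' n : ℕ, f θ n * t ^ n)) φ Θ :=
      C.exists_continuousLinearMap_eqOn_of_additive hopen
        (fun θ₁ h₁ θ₂ h₂ => by
          simp only [hmul θ₁ h₁ θ₂ h₂ t ht, Real.log_mul (hpos h₁ ht).ne' (hpos h₂ ht).ne'])
        ((hcont t ht).log fun θ hθ => (hpos hθ ht).ne')
    choose! φ hφ using hlin
    refine ⟨fun i t => φ t fun j => if i = j then 1 else 0, fun θ hθ t ht => ?_⟩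
    have hlog := hφ t ht hθ
    dsimp only at hlog
    rw [← Real.exp_log (hpos hθ ht), hlog, ← ContinuousLinearMap.coe_coe,
      (φ t).toLinearMap.pi_apply_eq_sum_univ θ]
    simp only [smul_eq_mul, mul_comm, ContinuousLinearMap.coe_coe]
  · rintro ⟨α, hα⟩ θ₁ h₁ θ₂ h₂ t ht
    rw [hα _ (hΘadd h₁ h₂) t ht, hα _ h₁ t ht, hα _ h₂ t ht, ← Real.exp_add,
      ← Finset.sum_add_distrib]
    simp only [Pi.add_apply, mul_add]

/-- Proposition 3: a family of pmfs `f_θ` on `ℕ` indexed by a nonempty open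
convex cone `Θ ⊆ ℝ^r`, with pgf `Φ(t,θ)` continuous in `θ` for each fixed `t ∈ (0,1)`, is
closed under addition (`Φ(t,θ₁+θ₂) = Φ(t,θ₁)Φ(t,θ₂)`) if and only if there are functions
`α_1, …, α_r` of `t` alone with `Φ(t,θ) = exp(∑ α_i(t) θ_i)`. -/
theorem proposition3 (r : ℕ) (hr : 1 ≤ r) (Θ : Set (Fin r → ℝ)) (hne : Θ.Nonempty)
    (hopen : IsOpen Θ) (hconv : Convex ℝ Θ)
    (hcone : ∀ c : ℝ, 0 < c → ∀ θ ∈ Θ, c • θ ∈ Θ)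
    (f : (Fin r → ℝ) → ℕ → ℝ) (hpmf : ∀ θ ∈ Θ, IsPMF (f θ))
    (hcont : ∀ t ∈ Set.Ioo (0 : ℝ) 1,
      ContinuousOn (fun θ => ∑' n : ℕ, f θ n * t ^ n) Θ) :
    (∀ θ₁ ∈ Θ, ∀ θ₂ ∈ Θ, ∀ t ∈ Set.Ioo (0 : ℝ) 1,
        ∑' n : ℕ, f (θ₁ + θ₂) n * t ^ n
          = (∑' n : ℕ, f θ₁ n * t ^ n) * (∑' n : ℕ, f θ₂ n * t ^ n)) ↔
    (∃ α : Fin r → ℝ → ℝ, ∀ θ ∈ Θ, ∀ t ∈ Set.Ioo (0 : ℝ) 1,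
        ∑' n : ℕ, f θ n * t ^ n = Real.exp (∑ i : Fin r, α i t * θ i)) :=
  proposition3_general r Θ hopen hconv hcone f hpmf hcont
end

section
/- (Example 3, general claim.) Let f be a probability mass function on ℕ with f(k) > 0 for every k ∈ ℕ, and suppose that f(2k+1)/f(2k) → ∞ as k → ∞. Then f is a top inverse: for every p ∈ (0,1), there is no probability mass function h on ℕ with T_p h = f. -/
open scoped BigOperators ENNReal

/-!
If `f = T_p h`, split the series for `f (m+1)` into its term `n = m+1`, which is at most
`p/(1-p)` times the term `n = m+1` of `f m`, and its terms `n ≥ m+2`. By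
`C(n,m+1)² ≤ 4 C(n,m) C(n,m+2)` and AM–GM each of the latter is at most `s` times the term `n`
of `f m` plus `s⁻¹` times the term `n` of `f (m+2)`, so
`f (m+1) ≤ (p/(1-p) + s) f m + s⁻¹ f (m+2)` for every `s > 0`. Optimizing in `s`, the ratio
`f (m+2)/f (m+1)` is at least `f (m+1)/f m / 4` minus a constant. So large even ratios force
large odd ratios, eventually `f (n+1) ≥ 2 f n`, and `f` cannot be summable.
-/

open Filter

theorem Nat.choose_succ_sq_le (m k : ℕ) :
    (m + k + 2).choose (m + 1) ^ 2 ≤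
      4 * (m + k + 2).choose m * (m + k + 2).choose (m + 2) := by
  set n := m + k + 2
  have e₁ : n.choose (m + 1) * (m + 1) = n.choose m * (k + 2) := by
    rw [Nat.choose_succ_right_eq]; congr 2; omega
  have e₂ : n.choose (m + 2) * (m + 2) = n.choose (m + 1) * (k + 1) := by
    rw [Nat.choose_succ_right_eq]; congr 2; omega
  refine Nat.le_of_mul_le_mul_right (c := (m + 1) * (k + 1)) ?_ (by positivity)
  calc n.choose (m + 1) ^ 2 * ((m + 1) * (k + 1))
      = (n.choose (m + 1) * (m + 1)) * (n.choose (m + 1) * (k + 1)) := by ring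
    _ = n.choose m * n.choose (m + 2) * ((k + 2) * (m + 2)) := by rw [e₁, ← e₂]; ring
    _ ≤ n.choose m * n.choose (m + 2) * (4 * ((m + 1) * (k + 1))) :=
        Nat.mul_le_mul_left _ (by nlinarith)
    _ = 4 * n.choose m * n.choose (m + 2) * ((m + 1) * (k + 1)) := by ring

theorem le_mul_add_inv_mul_of_sq_le {x a b s : ℝ} (ha : 0 ≤ a) (hb : 0 ≤ b) (hs : 0 < s)
    (hx : x ^ 2 ≤ 4 * a * b) : x ≤ s * a + s⁻¹ * b := by
  have hsum : 0 ≤ s * a + s⁻¹ * b := by positivity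
  have hsq : x ^ 2 ≤ (s * a + s⁻¹ * b) ^ 2 := by
    have : (s * a + s⁻¹ * b) ^ 2 = (s * a - s⁻¹ * b) ^ 2 + 4 * a * b := by
      field_simp; ring
    nlinarith [sq_nonneg (s * a - s⁻¹ * b)]
  exact (le_abs_self x).trans (abs_le_of_sq_le_sq hsq hsum)

theorem choose_mul_pow_mul_pow_le_one {p : ℝ} (hp₀ : 0 ≤ p) (hp₁ : p ≤ 1) (m k : ℕ) :
    ((m + k).choose m : ℝ) * p ^ m * (1 - p) ^ k ≤ 1 := by
  have hq : 0 ≤ 1 - p := by linarith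
  have hsum := add_pow p (1 - p) (m + k)
  rw [add_sub_cancel, one_pow] at hsum
  calc ((m + k).choose m : ℝ) * p ^ m * (1 - p) ^ k
      = p ^ m * (1 - p) ^ (m + k - m) * ((m + k).choose m) := by rw [Nat.add_sub_cancel_left]; ring
    _ ≤ ∑ j ∈ Finset.range (m + k + 1), p ^ j * (1 - p) ^ (m + k - j) * ((m + k).choose j) :=
        Finset.single_le_sum (f := fun j => p ^ j * (1 - p) ^ (m + k - j) * ((m + k).choose j))
        (fun j _ => by positivity) (Finset.mem_range.2 (by omega))
    _ = 1 := hsum.symm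

theorem div_div_four_sub_le_div_of_forall_le {a b c d : ℝ} (ha : 0 < a) (hb : 0 < b)
    (h : ∀ s, 0 < s → b ≤ (c + s) * a + s⁻¹ * d) : b / a / 4 - c / 2 ≤ d / b := by
  have hs := h (b / (2 * a)) (by positivity)
  rw [inv_div] at hs
  field_simp at hs ⊢
  nlinarith

theorem Nat.eventually_atTop_of_even_of_odd {P : ℕ → Prop} (he : ∀ᶠ k in atTop, P (2 * k))
    (ho : ∀ᶠ k in atTop, P (2 * k + 1)) : ∀ᶠ n in atTop, P n := by
  obtain ⟨K, hK⟩ := eventually_atTop.1 (he.and ho)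
  refine eventually_atTop.2 ⟨2 * K, fun n hn => ?_⟩
  obtain ⟨k, rfl | rfl⟩ := Nat.even_or_odd' n
  · exact (hK k (by omega)).1
  · exact (hK k (by omega)).2

noncomputable def thinTerm (p : ℝ) (h : ℕ → ℝ) (m k : ℕ) : ℝ :=
  h (m + k) * ((m + k).choose m : ℝ) * p ^ m * (1 - p) ^ k

section thinTerm

variable {p : ℝ} {h : ℕ → ℝ}

theorem thin_eq_tsum_thinTerm (m : ℕ) : thin p h m = ∑' k, thinTerm p h m k := rfl

theorem thinTerm_nonneg (hh : ∀ n, 0 ≤ h n) (hp₀ : 0 ≤ p) (hp₁ : p ≤ 1) (m k : ℕ) :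
    0 ≤ thinTerm p h m k := by
  have hq : 0 ≤ 1 - p := by linarith
  have hhmk := hh (m + k)
  unfold thinTerm
  positivity

theorem thinTerm_le (hh : ∀ n, 0 ≤ h n) (hp₀ : 0 ≤ p) (hp₁ : p ≤ 1) (m k : ℕ) :
    thinTerm p h m k ≤ h (m + k) := by
  calc thinTerm p h m k = h (m + k) * (((m + k).choose m : ℝ) * p ^ m * (1 - p) ^ k) := by
        unfold thinTerm; ring
    _ ≤ h (m + k) := mul_le_of_le_one_right (hh _) (choose_mul_pow_mul_pow_le_one hp₀ hp₁ m k)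

theorem summable_thinTerm (hh : ∀ n, 0 ≤ h n) (hsum : Summable h) (hp₀ : 0 ≤ p) (hp₁ : p ≤ 1)
    (m : ℕ) : Summable (thinTerm p h m) := by
  refine .of_nonneg_of_le (thinTerm_nonneg hh hp₀ hp₁ m) (thinTerm_le hh hp₀ hp₁ m) ?_
  simpa only [add_comm m] using (summable_nat_add_iff m).2 hsum

theorem thinTerm_succ_zero_le (hh : ∀ n, 0 ≤ h n) (hp₀ : 0 ≤ p) (hp₁ : p < 1) (m : ℕ) :
    thinTerm p h (m + 1) 0 ≤ p / (1 - p) * thinTerm p h m 1 := by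
  have hq : 1 - p ≠ 0 := by linarith
  have hrhs : p / (1 - p) * thinTerm p h m 1 = (m + 1) * (h (m + 1) * p ^ (m + 1)) := by
    simp only [thinTerm, Nat.choose_succ_self_right]
    field_simp
    push_cast
    ring
  rw [hrhs]
  simp only [thinTerm, add_zero, Nat.choose_self, Nat.cast_one, mul_one, pow_zero]
  exact le_mul_of_one_le_left (mul_nonneg (hh _) (pow_nonneg hp₀ _))
    (by linarith [m.cast_nonneg (α := ℝ)])

theorem thinTerm_succ_succ_le (hh : ∀ n, 0 ≤ h n) (hp₀ : 0 ≤ p) (hp₁ : p ≤ 1) {s : ℝ}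
    (hs : 0 < s) (m k : ℕ) :
    thinTerm p h (m + 1) (k + 1) ≤ s * thinTerm p h m (k + 2) + s⁻¹ * thinTerm p h (m + 2) k := by
  refine le_mul_add_inv_mul_of_sq_le (thinTerm_nonneg hh hp₀ hp₁ _ _)
    (thinTerm_nonneg hh hp₀ hp₁ _ _) hs ?_
  have e₁ : m + 1 + (k + 1) = m + k + 2 := by omega
  have e₂ : m + (k + 2) = m + k + 2 := by omega
  have e₃ : m + 2 + k = m + k + 2 := by omega
  simp only [thinTerm, e₁, e₂, e₃]
  set c := h (m + k + 2) * p ^ (m + 1) * (1 - p) ^ (k + 1)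
  have hbinom : ((m + k + 2).choose (m + 1) : ℝ) ^ 2 ≤
      4 * ((m + k + 2).choose m : ℝ) * ((m + k + 2).choose (m + 2) : ℝ) := by
    exact_mod_cast Nat.choose_succ_sq_le m k
  calc (h (m + k + 2) * ((m + k + 2).choose (m + 1) : ℝ) * p ^ (m + 1) * (1 - p) ^ (k + 1)) ^ 2
      = c ^ 2 * ((m + k + 2).choose (m + 1) : ℝ) ^ 2 := by ring
    _ ≤ c ^ 2 * (4 * ((m + k + 2).choose m : ℝ) * ((m + k + 2).choose (m + 2) : ℝ)) := by
        gcongr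
    _ = _ := by ring

theorem thin_succ_le (hh : ∀ n, 0 ≤ h n) (hsum : Summable h) (hp₀ : 0 ≤ p) (hp₁ : p < 1)
    (m : ℕ) {s : ℝ} (hs : 0 < s) :
    thin p h (m + 1) ≤ (p / (1 - p) + s) * thin p h m + s⁻¹ * thin p h (m + 2) := by
  have hT := summable_thinTerm hh hsum hp₀ hp₁.le
  have hT₀ := thinTerm_nonneg hh hp₀ hp₁.le
  simp only [thin_eq_tsum_thinTerm]
  calc ∑' k, thinTerm p h (m + 1) k
      = thinTerm p h (m + 1) 0 + ∑' k, thinTerm p h (m + 1) (k + 1) := (hT _).tsum_eq_zero_add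
    _ ≤ p / (1 - p) * thinTerm p h m 1 +
          ∑' k, (s * thinTerm p h m (k + 2) + s⁻¹ * thinTerm p h (m + 2) k) :=
        add_le_add (thinTerm_succ_zero_le hh hp₀ hp₁ m)
          (Summable.tsum_le_tsum (thinTerm_succ_succ_le hh hp₀ hp₁.le hs m)
            ((summable_nat_add_iff 1).2 (hT _))
            ((((summable_nat_add_iff 2).2 (hT m)).mul_left s).add ((hT _).mul_left s⁻¹)))
    _ = p / (1 - p) * thinTerm p h m 1 + s * ∑' k, thinTerm p h m (k + 2) +
          s⁻¹ * ∑' k, thinTerm p h (m + 2) k := by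
        rw [Summable.tsum_add (((summable_nat_add_iff 2).2 (hT m)).mul_left s)
          ((hT _).mul_left s⁻¹), tsum_mul_left, tsum_mul_left, add_assoc]
    _ ≤ p / (1 - p) * ∑' k, thinTerm p h m k + s * ∑' k, thinTerm p h m k +
          s⁻¹ * ∑' k, thinTerm p h (m + 2) k := by
        gcongr p / (1 - p) * ?_ + s * ?_ + _
        · exact (hT m).le_tsum 1 fun j _ => hT₀ m j
        · exact tsum_comp_le_tsum_of_inj (hT m) (hT₀ m) (add_left_injective 2)
    _ = _ := by ring

end thinTerm

/-- Example 3, general claim: if `f` is a pmf on `ℕ` with `f(k) > 0` for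
all `k` and `f(2k+1)/f(2k) → ∞`, then `f` is a top inverse: for every `p ∈ (0,1)` there
is no pmf `h` with `T_p h = f`. -/
theorem top_inverse_of_ratio_tendsto_atTop (f : ℕ → ℝ) (hf : IsPMF f)
    (hpos : ∀ k : ℕ, 0 < f k)
    (hlim : Filter.Tendsto (fun k : ℕ => f (2 * k + 1) / f (2 * k)) Filter.atTop
      Filter.atTop)
    (p : ℝ) (hp : p ∈ Set.Ioo (0 : ℝ) 1) :
    ¬ ∃ h : ℕ → ℝ, IsPMF h ∧ thin p h = f := by
  rintro ⟨h, ⟨hh, hsum⟩, rfl⟩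
  set c := p / (1 - p)
  have hratio (m : ℕ) :
      thin p h (m + 1) / thin p h m / 4 - c / 2 ≤ thin p h (m + 2) / thin p h (m + 1) :=
    div_div_four_sub_le_div_of_forall_le (hpos m) (hpos (m + 1)) fun _ hs =>
      thin_succ_le hh hsum.summable hp.1.le hp.2 m hs
  have hdouble : ∀ n, 2 ≤ thin p h (n + 1) / thin p h n → 2 * thin p h n ≤ thin p h (n + 1) :=
    fun n hn => (le_div_iff₀ (hpos n)).1 hn
  have hgrowth : ∀ᶠ n in atTop, 2 * ‖thin p h n‖ ≤ ‖thin p h (n + 1)‖ := by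
    simp only [Real.norm_of_nonneg (hpos _).le]
    refine Nat.eventually_atTop_of_even_of_odd ?_ ?_
    · filter_upwards [hlim.eventually_ge_atTop 2] with k hk using hdouble _ hk
    · filter_upwards [hlim.eventually_ge_atTop (8 + 2 * c)] with k hk
      exact hdouble _ (le_trans (by linarith) (hratio (2 * k)))
  exact not_summable_of_ratio_norm_eventually_ge one_lt_two
    (.of_forall fun n => norm_ne_zero_iff.2 (hpos n).ne') hgrowth hf.2.summable
end

section
/- Let (Ω, 𝔽, P) be a probability space carrying ℕ-valued random variables Y, Z with finite second moments and nonzero variances, i.i.d. sequences (ξ_i)_{i≥1} of Bernoulli(r) and (η_j)_{j≥1} of Bernoulli(s) random variables (r, s ∈ (0,1]), where the families (ξ_i), (η_j) and (Y,Z) are jointly independent of one another. Define the componentwise thinnings Y_r = Σ_{i=1}^{Y} ξ_i and Z_s = Σ_{j=1}^{Z} η_j. Then Cov(Y_r, Z_s) = r·s·Cov(Y, Z), Var(Y_r) = r²·Var(Y) + r(1−r)·E[Y], Var(Z_s) = s²·Var(Z) + s(1−s)·E[Z], and consequently, if Var(Y_r) and Var(Z_s) are nonzero, the correlation coefficients satisfy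 Corr(Y_r, Z_s)² ≤ Corr(Y, Z)², with equality when r = s = 1. -/
open scoped BigOperators
open MeasureTheory ProbabilityTheory

/-- Index type for the joint independence of `(Y,Z)`, the family `(ξ_i)` and the
family `(η_j)`. -/
abbrev JIdx : Type := Unit ⊕ (ℕ ⊕ ℕ)

/-- Codomains: `(Y,Z)` takes values in `ℕ × ℕ`, the Bernoulli variables in `ℕ`. -/
def JTy : JIdx → Type
  | .inl _ => ℕ × ℕ
  | .inr _ => ℕ

/-- The measurable space structures on the codomains. -/
def JMS : (i : JIdx) → MeasurableSpace (JTy i)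
  | .inl _ => show MeasurableSpace (ℕ × ℕ) from inferInstance
  | .inr _ => show MeasurableSpace ℕ from inferInstance

/-- The combined family: the pair `(Y,Z)`, the variables `ξ_i` and the variables `η_j`. -/
def JFam {Ω : Type*} (Y Z : Ω → ℕ) (ξ η : ℕ → Ω → ℕ) : (i : JIdx) → Ω → JTy i
  | .inl _ => fun ω => (Y ω, Z ω)
  | .inr (.inl i) => ξ i
  | .inr (.inr j) => η j

/-- The covariance of two real random variables. -/
noncomputable def cov {Ω : Type*} [MeasurableSpace Ω] (P : Measure Ω) (U V : Ω → ℝ) : ℝ :=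
  ∫ ω, (U ω - ∫ ω', U ω' ∂P) * (V ω - ∫ ω', V ω' ∂P) ∂P

/-- The correlation coefficient of two real random variables. -/
noncomputable def corr {Ω : Type*} [MeasurableSpace Ω] (P : Measure Ω) (U V : Ω → ℝ) : ℝ :=
  cov P U V / Real.sqrt (variance U P * variance V P)

/-!
Expanding `thinning W ζ = ∑' i, 1{i < W} ζ i` in `ℝ≥0∞`, every term factorises by the independence
of the Bernoulli variables from `(Y, Z)`. This gives `E[Y_r] = r E[Y]`, `E[Y_r Z_s] = r s E[Y Z]`
and, since `ξ_i ^ 2 = ξ_i`, `E[Y_r ^ 2] = r ^ 2 E[Y ^ 2] + r (1 - r) E[Y]`. So thinning multiplies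
the covariance by `r s` but each variance by at least `r ^ 2`, resp. `s ^ 2`, and the squared
correlation can only decrease.
-/

open ENNReal Set

def thinning {Ω : Type*} (W : Ω → ℕ) (ζ : ℕ → Ω → ℕ) (ω : Ω) : ℕ :=
  ∑ i ∈ Finset.range (W ω), ζ i ω

section Thinning

variable {Ω : Type*} {V W : Ω → ℕ} {ζ θ : ℕ → Ω → ℕ}

lemma thinning_le (h01 : ∀ i ω, ζ i ω ≤ 1) (ω : Ω) : thinning W ζ ω ≤ W ω :=
  (Finset.sum_le_sum fun i _ => h01 i ω).trans (by simp)

lemma thinning_one : thinning W (fun _ _ => 1) = W := by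
  ext ω; simp [thinning]

lemma natCast_thinning_eq_tsum (ω : Ω) :
    (thinning W ζ ω : ℝ≥0∞) = ∑' i, (W ⁻¹' Ioi i).indicator (fun ω => (ζ i ω : ℝ≥0∞)) ω := by
  rw [thinning, Nat.cast_sum, tsum_eq_sum (s := Finset.range (W ω))
    (f := fun i => (W ⁻¹' Ioi i).indicator (fun ω => (ζ i ω : ℝ≥0∞)) ω) fun i hi =>
      indicator_of_notMem (show ω ∉ W ⁻¹' Ioi i from fun h => hi (Finset.mem_range.2 h)) _]
  exact Finset.sum_congr rfl fun i hi => (indicator_of_mem (f := fun ω => (ζ i ω : ℝ≥0∞))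
    (show ω ∈ W ⁻¹' Ioi i from Finset.mem_range.1 hi)).symm

variable [MeasurableSpace Ω] {P : Measure Ω}

lemma measurable_thinning (hW : Measurable W) (hζ : ∀ i, Measurable (ζ i)) :
    Measurable (thinning W ζ) := by
  change Measurable ((fun x : Ω × ℕ => ∑ i ∈ Finset.range x.2, ζ i x.1) ∘ fun ω => (ω, W ω))
  refine (measurable_from_prod_countable_left fun n => ?_).comp (measurable_id.prodMk hW)
  simpa using Finset.measurable_sum (Finset.range n) fun i _ => hζ i

lemma lintegral_indicator_preimage_of_indepFun {α β : Type*} [MeasurableSpace α]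
    [MeasurableSpace β] {X : Ω → α} {U : Ω → β} (hXU : IndepFun X U P) (hX : Measurable X)
    (hU : Measurable U) {f : α → ℝ≥0∞} (hf : Measurable f) {s : Set β} (hs : MeasurableSet s) :
    ∫⁻ ω, (U ⁻¹' s).indicator (fun ω => f (X ω)) ω ∂P = (∫⁻ ω, f (X ω) ∂P) * P (U ⁻¹' s) := by
  have hfactor : (U ⁻¹' s).indicator (fun ω => f (X ω))
      = fun ω => f (X ω) * (U ⁻¹' s).indicator 1 ω := by
    ext ω; by_cases hω : U ω ∈ s <;> simp [hω]
  rw [hfactor, ← lintegral_indicator_one (hU hs)]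
  exact lintegral_mul_eq_lintegral_mul_lintegral_of_indepFun'' (hf.comp hX).aemeasurable
    ((measurable_one.indicator hs).comp hU).aemeasurable (hXU.comp hf (measurable_one.indicator hs))

lemma lintegral_thinning (hW : Measurable W) (hζ : ∀ i, Measurable (ζ i))
    (hind : ∀ i, IndepFun (ζ i) W P) :
    ∫⁻ ω, (thinning W ζ ω : ℝ≥0∞) ∂P = ∑' i, (∫⁻ ω, (ζ i ω : ℝ≥0∞) ∂P) * P (W ⁻¹' Ioi i) := by
  simp_rw [natCast_thinning_eq_tsum]
  rw [lintegral_tsum fun i => (Measurable.indicator (f := fun ω => (ζ i ω : ℝ≥0∞))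
    (measurable_of_countable _ |>.comp (hζ i)) (hW measurableSet_Ioi)).aemeasurable]
  exact tsum_congr fun i => lintegral_indicator_preimage_of_indepFun (hind i) (hζ i) hW
    (measurable_of_countable _) measurableSet_Ioi

lemma lintegral_thinning_mul_thinning (hV : Measurable V) (hW : Measurable W)
    (hζ : ∀ i, Measurable (ζ i)) (hθ : ∀ j, Measurable (θ j))
    (hind : ∀ i j, IndepFun (fun ω => (ζ i ω, θ j ω)) (fun ω => (V ω, W ω)) P) :
    ∫⁻ ω, (thinning V ζ ω : ℝ≥0∞) * thinning W θ ω ∂P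
      = ∑' i, ∑' j, (∫⁻ ω, (ζ i ω : ℝ≥0∞) * θ j ω ∂P) * P (V ⁻¹' Ioi i ∩ W ⁻¹' Ioi j) := by
  have hterm : ∀ i j ω, (V ⁻¹' Ioi i).indicator (fun ω => (ζ i ω : ℝ≥0∞)) ω
        * (W ⁻¹' Ioi j).indicator (fun ω => (θ j ω : ℝ≥0∞)) ω
      = ((fun ω => (V ω, W ω)) ⁻¹' (Ioi i ×ˢ Ioi j)).indicator
          (fun ω => (fun x : ℕ × ℕ => (x.1 : ℝ≥0∞) * x.2) (ζ i ω, θ j ω)) ω := by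
    intro i j ω
    rw [mk_preimage_prod, inter_indicator_mul]
  have hmeas : ∀ i j, Measurable (((fun ω => (V ω, W ω)) ⁻¹' (Ioi i ×ˢ Ioi j)).indicator
      (fun ω => (fun x : ℕ × ℕ => (x.1 : ℝ≥0∞) * x.2) (ζ i ω, θ j ω))) := fun i j =>
    ((measurable_of_countable (fun x : ℕ × ℕ => (x.1 : ℝ≥0∞) * x.2)).comp
      ((hζ i).prodMk (hθ j))).indicator
      ((hV.prodMk hW) (measurableSet_Ioi.prod measurableSet_Ioi))
  simp_rw [natCast_thinning_eq_tsum, ← ENNReal.tsum_mul_right, ← ENNReal.tsum_mul_left, hterm]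
  rw [lintegral_tsum fun i => (Measurable.tsum (hmeas i)).aemeasurable]
  refine tsum_congr fun i => ?_
  rw [lintegral_tsum fun j => (hmeas i j).aemeasurable]
  refine tsum_congr fun j => ?_
  rw [← mk_preimage_prod]
  exact lintegral_indicator_preimage_of_indepFun (hind i j) ((hζ i).prodMk (hθ j)) (hV.prodMk hW)
    (measurable_of_countable (fun x : ℕ × ℕ => (x.1 : ℝ≥0∞) * x.2))
    (measurableSet_Ioi.prod measurableSet_Ioi)

lemma integral_natCast_eq_toReal_lintegral {g : Ω → ℕ} (hg : Measurable g) :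
    ∫ ω, (g ω : ℝ) ∂P = (∫⁻ ω, (g ω : ℝ≥0∞) ∂P).toReal := by
  simpa using integral_toReal (f := fun ω => (g ω : ℝ≥0∞))
    (measurable_of_countable _ |>.comp hg).aemeasurable (ae_of_all _ fun ω => natCast_lt_top _)

lemma memLp_natCast_thinning {e : ℝ≥0∞} (hW : Measurable W)
    (hWe : MemLp (fun ω => (W ω : ℝ)) e P)
    (hζ : ∀ i, Measurable (ζ i)) (h01 : ∀ i ω, ζ i ω ≤ 1) :
    MemLp (fun ω => (thinning W ζ ω : ℝ)) e P :=
  hWe.of_le (measurable_of_countable _ |>.comp (measurable_thinning hW hζ)).aestronglyMeasurable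
    (ae_of_all _ fun ω => by simpa using thinning_le h01 ω)

variable [IsProbabilityMeasure P]

lemma lintegral_natCast_eq_tsum (hW : Measurable W) :
    ∫⁻ ω, (W ω : ℝ≥0∞) ∂P = ∑' i, P (W ⁻¹' Ioi i) := by
  simpa [thinning_one] using lintegral_thinning (P := P) (ζ := fun _ _ => 1) hW
    (fun _ => measurable_const) fun _ => indepFun_const_left 1 W

lemma lintegral_natCast_mul_eq_tsum (hV : Measurable V) (hW : Measurable W) :
    ∫⁻ ω, (V ω : ℝ≥0∞) * W ω ∂P = ∑' i, ∑' j, P (V ⁻¹' Ioi i ∩ W ⁻¹' Ioi j) := by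
  simpa [thinning_one] using lintegral_thinning_mul_thinning (P := P) (ζ := fun _ _ => 1)
    (θ := fun _ _ => 1) hV hW (fun _ => measurable_const) (fun _ => measurable_const)
    fun _ _ => indepFun_const_left (1, 1) _

end Thinning

structure IsBernoulli {Ω : Type*} [MeasurableSpace Ω] (P : Measure Ω) (ζ : Ω → ℕ) (p : ℝ) :
    Prop where
  measurable : Measurable ζ
  le_one : ∀ ω, ζ ω ≤ 1
  measure_eq_one : P {ω | ζ ω = 1} = ENNReal.ofReal p

namespace IsBernoulli

variable {Ω : Type*} [MeasurableSpace Ω] {P : Measure Ω} {ζ θ : Ω → ℕ} {p q : ℝ}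

lemma lintegral_natCast (h : IsBernoulli P ζ p) : ∫⁻ ω, (ζ ω : ℝ≥0∞) ∂P = ENNReal.ofReal p := by
  have hs : MeasurableSet {ω | ζ ω = 1} := h.measurable (measurableSet_singleton 1)
  have hindicator : ∀ ω, (ζ ω : ℝ≥0∞) = {ω | ζ ω = 1}.indicator 1 ω := fun ω => by
    rcases Nat.le_one_iff_eq_zero_or_eq_one.1 (h.le_one ω) with h0 | h1 <;> simp [*]
  rw [lintegral_congr hindicator, lintegral_indicator_one hs, h.measure_eq_one]

lemma lintegral_natCast_mul_self (h : IsBernoulli P ζ p) :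
    ∫⁻ ω, (ζ ω : ℝ≥0∞) * ζ ω ∂P = ENNReal.ofReal p := by
  have hidem : ∀ ω, (ζ ω : ℝ≥0∞) * ζ ω = ζ ω := fun ω => by
    rcases Nat.le_one_iff_eq_zero_or_eq_one.1 (h.le_one ω) with h0 | h1 <;> simp [*]
  rw [lintegral_congr hidem, h.lintegral_natCast]

lemma lintegral_natCast_mul_of_indepFun (hζ : IsBernoulli P ζ p) (hθ : IsBernoulli P θ q)
    (hind : IndepFun ζ θ P) :
    ∫⁻ ω, (ζ ω : ℝ≥0∞) * θ ω ∂P = ENNReal.ofReal p * ENNReal.ofReal q := by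
  rw [lintegral_mul_eq_lintegral_mul_lintegral_of_indepFun'' (f := fun ω => (ζ ω : ℝ≥0∞))
    (g := fun ω => (θ ω : ℝ≥0∞)) (measurable_of_countable _ |>.comp hζ.measurable).aemeasurable
    (measurable_of_countable _ |>.comp hθ.measurable).aemeasurable
    (hind.comp (measurable_of_countable _) (measurable_of_countable _)),
    hζ.lintegral_natCast, hθ.lintegral_natCast]

end IsBernoulli

lemma cov_eq_covariance {Ω : Type*} [MeasurableSpace Ω] (P : Measure Ω) (U V : Ω → ℝ) :
    cov P U V = covariance U V P := rfl

section BernoulliThinning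

variable {Ω : Type*} [MeasurableSpace Ω] {P : Measure Ω} [IsProbabilityMeasure P]
  {V W : Ω → ℕ} {ζ θ : ℕ → Ω → ℕ} {p q : ℝ}

lemma lintegral_thinning_of_isBernoulli (hW : Measurable W) (hζ : ∀ i, IsBernoulli P (ζ i) p)
    (hind : ∀ i, IndepFun (ζ i) W P) :
    ∫⁻ ω, (thinning W ζ ω : ℝ≥0∞) ∂P = ENNReal.ofReal p * ∫⁻ ω, (W ω : ℝ≥0∞) ∂P := by
  simp_rw [lintegral_thinning hW (fun i => (hζ i).measurable) hind, (hζ _).lintegral_natCast,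
    ENNReal.tsum_mul_left, lintegral_natCast_eq_tsum hW]

lemma lintegral_thinning_mul_thinning_of_isBernoulli (hV : Measurable V) (hW : Measurable W)
    (hζ : ∀ i, IsBernoulli P (ζ i) p) (hθ : ∀ j, IsBernoulli P (θ j) q)
    (hind : ∀ i j, IndepFun (fun ω => (ζ i ω, θ j ω)) (fun ω => (V ω, W ω)) P)
    (hζθ : ∀ i j, IndepFun (ζ i) (θ j) P) :
    ∫⁻ ω, (thinning V ζ ω : ℝ≥0∞) * thinning W θ ω ∂P
      = ENNReal.ofReal p * ENNReal.ofReal q * ∫⁻ ω, (V ω : ℝ≥0∞) * W ω ∂P := by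
  simp_rw [lintegral_thinning_mul_thinning hV hW (fun i => (hζ i).measurable)
    (fun j => (hθ j).measurable) hind, fun i j => (hζ i).lintegral_natCast_mul_of_indepFun (hθ j)
    (hζθ i j), ENNReal.tsum_mul_left, lintegral_natCast_mul_eq_tsum hV hW]

lemma lintegral_thinning_mul_self_of_isBernoulli (hp₀ : 0 ≤ p) (hp₁ : p ≤ 1) (hW : Measurable W)
    (hζ : ∀ i, IsBernoulli P (ζ i) p) (hind : ∀ i j, IndepFun (fun ω => (ζ i ω, ζ j ω)) W P)
    (hζζ : Pairwise fun i j => IndepFun (ζ i) (ζ j) P) :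
    ∫⁻ ω, (thinning W ζ ω : ℝ≥0∞) * thinning W ζ ω ∂P
      = ENNReal.ofReal (p ^ 2) * ∫⁻ ω, (W ω : ℝ≥0∞) * W ω ∂P
        + ENNReal.ofReal (p * (1 - p)) * ∫⁻ ω, (W ω : ℝ≥0∞) ∂P := by
  have hmoment : ∀ i j, ∫⁻ ω, (ζ i ω : ℝ≥0∞) * ζ j ω ∂P
      = ENNReal.ofReal (p ^ 2) + if i = j then ENNReal.ofReal (p * (1 - p)) else 0 := by
    intro i j
    rcases eq_or_ne i j with rfl | hij
    · rw [(hζ i).lintegral_natCast_mul_self, if_pos rfl,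
        ← ENNReal.ofReal_add (by positivity) (mul_nonneg hp₀ (sub_nonneg.2 hp₁))]
      ring_nf
    · rw [(hζ i).lintegral_natCast_mul_of_indepFun (hζ j) (hζζ hij), if_neg hij, add_zero,
        ← ENNReal.ofReal_mul hp₀, sq]
  have hdiag : ∀ i, ∑' j, (if i = j then ENNReal.ofReal (p * (1 - p)) else 0)
      * P (W ⁻¹' Ioi i ∩ W ⁻¹' Ioi j) = ENNReal.ofReal (p * (1 - p)) * P (W ⁻¹' Ioi i) := by
    intro i
    rw [tsum_eq_single i fun j hj => by simp [Ne.symm hj], if_pos rfl, inter_self]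
  rw [lintegral_thinning_mul_thinning hW hW (fun i => (hζ i).measurable)
    (fun i => (hζ i).measurable) fun i j => (hind i j).comp measurable_id
      (measurable_id.prodMk measurable_id)]
  simp_rw [hmoment, add_mul, ENNReal.tsum_add, hdiag, ENNReal.tsum_mul_left,
    lintegral_natCast_mul_eq_tsum hW hW, lintegral_natCast_eq_tsum hW]

lemma integral_thinning (hp : 0 ≤ p) (hW : Measurable W) (hζ : ∀ i, IsBernoulli P (ζ i) p)
    (hind : ∀ i, IndepFun (ζ i) W P) :
    ∫ ω, (thinning W ζ ω : ℝ) ∂P = p * ∫ ω, (W ω : ℝ) ∂P := by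
  rw [integral_natCast_eq_toReal_lintegral (measurable_thinning hW fun i => (hζ i).measurable),
    lintegral_thinning_of_isBernoulli hW hζ hind, toReal_mul, toReal_ofReal hp,
    integral_natCast_eq_toReal_lintegral hW]

lemma integral_thinning_mul_thinning (hp : 0 ≤ p) (hq : 0 ≤ q) (hV : Measurable V)
    (hW : Measurable W) (hζ : ∀ i, IsBernoulli P (ζ i) p) (hθ : ∀ j, IsBernoulli P (θ j) q)
    (hind : ∀ i j, IndepFun (fun ω => (ζ i ω, θ j ω)) (fun ω => (V ω, W ω)) P)
    (hζθ : ∀ i j, IndepFun (ζ i) (θ j) P) :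
    ∫ ω, (thinning V ζ ω : ℝ) * thinning W θ ω ∂P = p * q * ∫ ω, (V ω : ℝ) * W ω ∂P := by
  simp_rw [← Nat.cast_mul]
  rw [integral_natCast_eq_toReal_lintegral (g := fun ω => thinning V ζ ω * thinning W θ ω)
      ((measurable_thinning hV fun i => (hζ i).measurable).mul
      (measurable_thinning hW fun j => (hθ j).measurable)),
    integral_natCast_eq_toReal_lintegral (g := fun ω => V ω * W ω) (hV.mul hW)]
  simp_rw [Nat.cast_mul]
  rw [lintegral_thinning_mul_thinning_of_isBernoulli hV hW hζ hθ hind hζθ, toReal_mul, toReal_mul,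
    toReal_ofReal hp, toReal_ofReal hq]

lemma integral_thinning_sq (hp₀ : 0 ≤ p) (hp₁ : p ≤ 1) (hW : Measurable W)
    (hW2 : Integrable (fun ω => (W ω : ℝ) ^ 2) P) (hζ : ∀ i, IsBernoulli P (ζ i) p)
    (hind : ∀ i j, IndepFun (fun ω => (ζ i ω, ζ j ω)) W P)
    (hζζ : Pairwise fun i j => IndepFun (ζ i) (ζ j) P) :
    ∫ ω, (thinning W ζ ω : ℝ) ^ 2 ∂P
      = p ^ 2 * ∫ ω, (W ω : ℝ) ^ 2 ∂P + p * (1 - p) * ∫ ω, (W ω : ℝ) ∂P := by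
  have hfin2 : ∫⁻ ω, (W ω : ℝ≥0∞) * W ω ∂P ≠ ∞ := by
    simpa [sq] using hW2.lintegral_lt_top.ne
  have hfin1 : ∫⁻ ω, (W ω : ℝ≥0∞) ∂P ≠ ∞ :=
    ne_top_of_le_ne_top hfin2 (lintegral_mono fun ω => by
      rw [← Nat.cast_mul]; exact Nat.cast_le.2 (Nat.le_mul_self (W ω)))
  simp_rw [sq, ← Nat.cast_mul]
  have hζm i := (hζ i).measurable
  rw [integral_natCast_eq_toReal_lintegral (g := fun ω => thinning W ζ ω * thinning W ζ ω)
      ((measurable_thinning hW hζm).mul (measurable_thinning hW hζm)),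
    integral_natCast_eq_toReal_lintegral (g := fun ω => W ω * W ω) (hW.mul hW),
    integral_natCast_eq_toReal_lintegral hW]
  simp_rw [Nat.cast_mul]
  rw [lintegral_thinning_mul_self_of_isBernoulli hp₀ hp₁ hW hζ hind hζζ,
    toReal_add (mul_ne_top ofReal_ne_top hfin2) (mul_ne_top ofReal_ne_top hfin1), toReal_mul,
    toReal_mul, toReal_ofReal (by positivity), toReal_ofReal (mul_nonneg hp₀ (by linarith)), sq]

lemma cov_thinning (hp : 0 ≤ p) (hq : 0 ≤ q) (hV : Measurable V) (hW : Measurable W)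
    (hV2 : MemLp (fun ω => (V ω : ℝ)) 2 P) (hW2 : MemLp (fun ω => (W ω : ℝ)) 2 P)
    (hζ : ∀ i, IsBernoulli P (ζ i) p) (hθ : ∀ j, IsBernoulli P (θ j) q)
    (hind : ∀ i j, IndepFun (fun ω => (ζ i ω, θ j ω)) (fun ω => (V ω, W ω)) P)
    (hζθ : ∀ i j, IndepFun (ζ i) (θ j) P) :
    cov P (fun ω => (thinning V ζ ω : ℝ)) (fun ω => (thinning W θ ω : ℝ))
      = p * q * cov P (fun ω => (V ω : ℝ)) (fun ω => (W ω : ℝ)) := by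
  rw [cov_eq_covariance, cov_eq_covariance,
    covariance_eq_sub (memLp_natCast_thinning hV hV2 (fun i => (hζ i).measurable)
      fun i => (hζ i).le_one) (memLp_natCast_thinning hW hW2 (fun j => (hθ j).measurable)
      fun j => (hθ j).le_one), covariance_eq_sub hV2 hW2]
  simp only [Pi.mul_apply]
  rw [integral_thinning_mul_thinning hp hq hV hW hζ hθ hind hζθ,
    integral_thinning hp hV hζ fun i => (hind i 0).comp measurable_fst measurable_fst,
    integral_thinning hq hW hθ fun j => (hind 0 j).comp measurable_snd measurable_snd]
  ring

lemma variance_thinning (hp₀ : 0 ≤ p) (hp₁ : p ≤ 1) (hW : Measurable W)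
    (hW2 : MemLp (fun ω => (W ω : ℝ)) 2 P) (hζ : ∀ i, IsBernoulli P (ζ i) p)
    (hind : ∀ i j, IndepFun (fun ω => (ζ i ω, ζ j ω)) W P)
    (hζζ : Pairwise fun i j => IndepFun (ζ i) (ζ j) P) :
    variance (fun ω => (thinning W ζ ω : ℝ)) P
      = p ^ 2 * variance (fun ω => (W ω : ℝ)) P + p * (1 - p) * ∫ ω, (W ω : ℝ) ∂P := by
  rw [variance_eq_sub (memLp_natCast_thinning hW hW2 (fun i => (hζ i).measurable)
    fun i => (hζ i).le_one), variance_eq_sub hW2]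
  simp only [Pi.pow_apply]
  rw [integral_thinning_sq hp₀ hp₁ hW hW2.integrable_sq hζ hind hζζ,
    integral_thinning hp₀ hW hζ fun i => (hind i i).comp measurable_fst measurable_id]
  ring

end BernoulliThinning

lemma corr_sq_le_of_cov_eq {Ω : Type*} [MeasurableSpace Ω] {P : Measure Ω} {U V U' V' : Ω → ℝ}
    {r s : ℝ} (hr : 0 < r) (hs : 0 < s) (hU : 0 < variance U P) (hV : 0 < variance V P)
    (hcov : cov P U' V' = r * s * cov P U V) (hU' : r ^ 2 * variance U P ≤ variance U' P)
    (hV' : s ^ 2 * variance V P ≤ variance V' P) :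
    corr P U' V' ^ 2 ≤ corr P U V ^ 2 := by
  have hUV' : 0 < variance U' P * variance V' P :=
    mul_pos (hU'.trans_lt' (by positivity)) (hV'.trans_lt' (by positivity))
  simp only [corr, div_pow, Real.sq_sqrt hUV'.le, Real.sq_sqrt (mul_pos hU hV).le, hcov]
  calc (r * s * cov P U V) ^ 2 / (variance U' P * variance V' P)
      ≤ (r * s * cov P U V) ^ 2 / (r ^ 2 * variance U P * (s ^ 2 * variance V P)) :=
        div_le_div_of_nonneg_left (sq_nonneg _) (by positivity)
          (mul_le_mul hU' hV' (by positivity) (variance_nonneg U' P))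
    _ = cov P U V ^ 2 / (variance U P * variance V P) := by field_simp

/-- let `Y, Z` be `ℕ`-valued random variables with finite second moments and
nonzero variances, and let `(ξ_i)` and `(η_j)` be i.i.d. Bernoulli(`r`) and Bernoulli(`s`)
sequences, everything jointly independent. For the componentwise thinnings
`Y_r = ∑_{i<Y} ξ_i` and `Z_s = ∑_{j<Z} η_j` one has `Cov(Y_r,Z_s) = r s Cov(Y,Z)`,
`Var(Y_r) = r² Var(Y) + r(1-r) E[Y]`, `Var(Z_s) = s² Var(Z) + s(1-s) E[Z]`, and if
`Var(Y_r) ≠ 0 ≠ Var(Z_s)` then `Corr(Y_r,Z_s)² ≤ Corr(Y,Z)²`, with equality when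
`r = s = 1`. -/
theorem thinning_diminishes_correlation {Ω : Type*} [MeasurableSpace Ω]
    (P : Measure Ω) [IsProbabilityMeasure P]
    (Y Z : Ω → ℕ) (ξ η : ℕ → Ω → ℕ) (r s : ℝ)
    (hr : r ∈ Set.Ioc (0 : ℝ) 1) (hs : s ∈ Set.Ioc (0 : ℝ) 1)
    (hYm : Measurable Y) (hZm : Measurable Z)
    (hξm : ∀ i, Measurable (ξ i)) (hηm : ∀ j, Measurable (η j))
    (hY2 : Integrable (fun ω => ((Y ω : ℝ)) ^ 2) P)
    (hZ2 : Integrable (fun ω => ((Z ω : ℝ)) ^ 2) P)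
    (hYvar : variance (fun ω => (Y ω : ℝ)) P ≠ 0)
    (hZvar : variance (fun ω => (Z ω : ℝ)) P ≠ 0)
    (hξ01 : ∀ i ω, ξ i ω ≤ 1) (hη01 : ∀ j ω, η j ω ≤ 1)
    (hξd : ∀ i, P {ω | ξ i ω = 1} = ENNReal.ofReal r)
    (hηd : ∀ j, P {ω | η j ω = 1} = ENNReal.ofReal s)
    (hindep : iIndepFun (m := JMS) (JFam Y Z ξ η) P) :
    cov P (fun ω => ((∑ i ∈ Finset.range (Y ω), ξ i ω : ℕ) : ℝ))
        (fun ω => ((∑ j ∈ Finset.range (Z ω), η j ω : ℕ) : ℝ))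
      = r * s * cov P (fun ω => (Y ω : ℝ)) (fun ω => (Z ω : ℝ)) ∧
    variance (fun ω => ((∑ i ∈ Finset.range (Y ω), ξ i ω : ℕ) : ℝ)) P
      = r ^ 2 * variance (fun ω => (Y ω : ℝ)) P
        + r * (1 - r) * ∫ ω, (Y ω : ℝ) ∂P ∧
    variance (fun ω => ((∑ j ∈ Finset.range (Z ω), η j ω : ℕ) : ℝ)) P
      = s ^ 2 * variance (fun ω => (Z ω : ℝ)) P
        + s * (1 - s) * ∫ ω, (Z ω : ℝ) ∂P ∧
    (variance (fun ω => ((∑ i ∈ Finset.range (Y ω), ξ i ω : ℕ) : ℝ)) P ≠ 0 →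
      variance (fun ω => ((∑ j ∈ Finset.range (Z ω), η j ω : ℕ) : ℝ)) P ≠ 0 →
      (corr P (fun ω => ((∑ i ∈ Finset.range (Y ω), ξ i ω : ℕ) : ℝ))
          (fun ω => ((∑ j ∈ Finset.range (Z ω), η j ω : ℕ) : ℝ))) ^ 2
        ≤ (corr P (fun ω => (Y ω : ℝ)) (fun ω => (Z ω : ℝ))) ^ 2) ∧
    (r = 1 → s = 1 →
      (corr P (fun ω => ((∑ i ∈ Finset.range (Y ω), ξ i ω : ℕ) : ℝ))
          (fun ω => ((∑ j ∈ Finset.range (Z ω), η j ω : ℕ) : ℝ))) ^ 2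
        = (corr P (fun ω => (Y ω : ℝ)) (fun ω => (Z ω : ℝ))) ^ 2) := by
  obtain ⟨hr0, hr1⟩ := hr
  obtain ⟨hs0, hs1⟩ := hs
  have hJm : ∀ k, @Measurable Ω (JTy k) _ (JMS k) (JFam Y Z ξ η k)
    | .inl _ => hYm.prodMk hZm
    | .inr (.inl i) => hξm i
    | .inr (.inr j) => hηm j
  have hpair (a b : ℕ ⊕ ℕ) :=
    hindep.indepFun_prodMk hJm (.inr a) (.inr b) (.inl ()) (by simp) (by simp)
  have hsingle (a b : ℕ ⊕ ℕ) (hab : a ≠ b) :=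
    hindep.indepFun (i := .inr a) (j := .inr b) (by simpa using hab)
  have hξ : ∀ i, IsBernoulli P (ξ i) r := fun i => ⟨hξm i, hξ01 i, hξd i⟩
  have hη : ∀ j, IsBernoulli P (η j) s := fun j => ⟨hηm j, hη01 j, hηd j⟩
  have hYL2 : MemLp (fun ω => (Y ω : ℝ)) 2 P :=
    (memLp_two_iff_integrable_sq (measurable_of_countable _ |>.comp hYm).aestronglyMeasurable).2 hY2
  have hZL2 : MemLp (fun ω => (Z ω : ℝ)) 2 P :=
    (memLp_two_iff_integrable_sq (measurable_of_countable _ |>.comp hZm).aestronglyMeasurable).2 hZ2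
  set T : Ω → ℝ := fun ω => ((∑ i ∈ Finset.range (Y ω), ξ i ω : ℕ) : ℝ)
  set S : Ω → ℝ := fun ω => ((∑ j ∈ Finset.range (Z ω), η j ω : ℕ) : ℝ)
  have hcov : cov P T S = r * s * cov P (fun ω => (Y ω : ℝ)) (fun ω => (Z ω : ℝ)) :=
    cov_thinning hr0.le hs0.le hYm hZm hYL2 hZL2 hξ hη
      (fun i j => hpair (.inl i) (.inr j))
      fun i j => hsingle (.inl i) (.inr j) (by simp)
  have hvarT : variance T P
      = r ^ 2 * variance (fun ω => (Y ω : ℝ)) P + r * (1 - r) * ∫ ω, (Y ω : ℝ) ∂P :=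
    variance_thinning hr0.le hr1 hYm hYL2 hξ
      (fun i j => (hpair (.inl i) (.inl j)).comp measurable_id measurable_fst)
      fun i j hij => hsingle (.inl i) (.inl j) (by simpa using hij)
  have hvarS : variance S P
      = s ^ 2 * variance (fun ω => (Z ω : ℝ)) P + s * (1 - s) * ∫ ω, (Z ω : ℝ) ∂P :=
    variance_thinning hs0.le hs1 hZm hZL2 hη
      (fun i j => (hpair (.inr i) (.inr j)).comp measurable_id measurable_snd)
      fun i j hij => hsingle (.inr i) (.inr j) (by simpa using hij)
  have hEY : 0 ≤ r * (1 - r) * ∫ ω, (Y ω : ℝ) ∂P :=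
    mul_nonneg (mul_nonneg hr0.le (sub_nonneg.2 hr1)) (integral_nonneg fun _ => Nat.cast_nonneg _)
  have hEZ : 0 ≤ s * (1 - s) * ∫ ω, (Z ω : ℝ) ∂P :=
    mul_nonneg (mul_nonneg hs0.le (sub_nonneg.2 hs1)) (integral_nonneg fun _ => Nat.cast_nonneg _)
  refine ⟨hcov, hvarT, hvarS, fun _ _ => corr_sq_le_of_cov_eq hr0 hs0
    ((variance_nonneg _ P).lt_of_ne' hYvar) ((variance_nonneg _ P).lt_of_ne' hZvar) hcov
    (hvarT ▸ le_add_of_nonneg_right hEY) (hvarS ▸ le_add_of_nonneg_right hEZ), ?_⟩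
  rintro rfl rfl
  simp [corr, hcov, hvarT, hvarS]
end
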